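/- arXiv:1512.05146 — 14 statements merged into one kernel-verified Lean document; each statement's English description precedes it below -/
import Mathlib

section
/- Let (α,β) ∈ U and let (m̄_k)_{k≥1} be a nondecreasing sequence of integers with m̄_1 ≥ 1 (and m̄_0 := 0). If the point β follows the pattern R L^{m_1} R L^{m_2} R L^{m_3} ⋯ under T_{α,β} (i.e. the kneading sequence of T_{α,β} is R L^{m_1} R L^{m_2} ⋯), then Θ(α,β) = 0, i.e. 1 − β + Σ_{k=1}^∞ ((α−1)/β)^k (α/β)^{m̄_k} = 0. -/
/-- The skew tent map `T_{α,β}`. -/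
noncomputable def T (α β x : ℝ) : ℝ :=
  if x ≤ α then β / α * x else β / (1 - α) * (1 - x)

/-- The auxiliary function `Θ` associated to the sequence `m̄` (with `m̄ 0 = 0`):
`Θ(α,β) = 1 - β + ∑_{k=1}^∞ ((α-1)/β)^k (α/β)^{m̄_k}`. -/
noncomputable def theta (m : ℕ → ℕ) (α β : ℝ) : ℝ :=
  1 - β + ∑' k : ℕ, ((α - 1) / β) ^ (k + 1) * (α / β) ^ (m (k + 1))

/-!
Write `x_n = T^n β`, `q = α/β` and `c = (1-α)/β`. Inverting the left branch gives
`x_n = q x_{n+1}` and inverting the right branch gives `x_n = 1 - c x_{n+1}`. Between the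
`k`-th and `(k+1)`-st visit to the right branch (at times `k + m̄_k`) the orbit makes
`m̄_{k+1} - m̄_k` left steps, so `z_k = (-c)^k q^{m̄_k} x_{k+m̄_k}` satisfies
`z_k - z_{k+1} = (-c)^k q^{m̄_k}`. Since `0 < c < 1` and the orbit stays in `[0,1]`, `z_k → 0`,
and the telescoping series gives `∑_{k≥0} (-c)^k q^{m̄_k} = z_0 = β`, which is `Θ(α,β) = 0`.
-/

open Filter Topology

theorem hasSum_sub_succ {E : Type*} [NormedAddCommGroup E] {z : ℕ → E}
    (hz : Tendsto z atTop (𝓝 0)) (hs : Summable fun k => ‖z k - z (k + 1)‖) :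
    HasSum (fun k => z k - z (k + 1)) (z 0) := by
  rw [hasSum_iff_tendsto_nat_of_summable_norm hs]
  simp only [Finset.sum_range_sub']
  simpa using (tendsto_const_nhds (x := z 0)).sub hz

theorem abs_pow_mul_pow_mul_le {r q y : ℝ} (hq0 : 0 ≤ q) (hq1 : q ≤ 1) (hy : |y| ≤ 1)
    (k j : ℕ) : |r ^ k * (q ^ j * y)| ≤ |r| ^ k := by
  rw [abs_mul, abs_pow, abs_mul, abs_pow, abs_of_nonneg hq0]
  have : q ^ j * |y| ≤ 1 := mul_le_one₀ (pow_le_one₀ hq0 hq1) (abs_nonneg y) hy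
  calc |r| ^ k * (q ^ j * |y|) ≤ |r| ^ k * 1 := by gcongr
    _ = |r| ^ k := mul_one _

section SkewTent

variable {α β : ℝ}

theorem T_mapsTo_Icc (hα0 : 0 < α) (hα1 : α < 1) (hβ0 : 0 ≤ β) (hβ1 : β ≤ 1) :
    Set.MapsTo (T α β) (Set.Icc 0 1) (Set.Icc 0 1) := by
  rintro x ⟨hx0, hx1⟩
  have hα1' : 0 < 1 - α := sub_pos.2 hα1
  unfold T
  split_ifs with hx
  · refine ⟨by positivity, ?_⟩
    calc β / α * x ≤ β / α * α := by gcongr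
      _ = β := div_mul_cancel₀ _ hα0.ne'
      _ ≤ 1 := hβ1
  · have hx' : 0 ≤ 1 - x := sub_nonneg.2 hx1
    refine ⟨by positivity, ?_⟩
    calc β / (1 - α) * (1 - x) ≤ β / (1 - α) * (1 - α) := by gcongr; linarith
      _ = β := div_mul_cancel₀ _ hα1'.ne'
      _ ≤ 1 := hβ1

theorem div_mul_T_of_le (hα : α ≠ 0) (hβ : β ≠ 0) {x : ℝ} (hx : x ≤ α) :
    α / β * T α β x = x := by
  rw [T, if_pos hx]
  field_simp

theorem one_sub_div_mul_T_of_lt (hα : α ≠ 1) (hβ : β ≠ 0) {x : ℝ} (hx : α < x) :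
    1 - (1 - α) / β * T α β x = x := by
  have hα' : 1 - α ≠ 0 := sub_ne_zero.2 hα.symm
  rw [T, if_neg hx.not_ge]
  field_simp
  ring

theorem pow_div_mul_iterate_T (hα : α ≠ 0) (hβ : β ≠ 0) {x : ℝ} {j : ℕ}
    (hleft : ∀ i < j, (T α β)^[i] x ≤ α) : (α / β) ^ j * (T α β)^[j] x = x := by
  induction j with
  | zero => simp
  | succ j ih =>
    rw [Function.iterate_succ_apply', pow_succ, mul_assoc,
      div_mul_T_of_le hα hβ (hleft j j.lt_succ_self)]
    exact ih fun i hi => hleft i (hi.trans j.lt_succ_self)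

end SkewTent

def FollowsPattern (α β : ℝ) (m : ℕ → ℕ) (x : ℝ) : Prop :=
  ∀ n : ℕ, ((∃ k : ℕ, n = k + m k) → α < (T α β)^[n] x) ∧
    ((¬ ∃ k : ℕ, n = k + m k) → (T α β)^[n] x < α)

namespace FollowsPattern

variable {α β x : ℝ} {m : ℕ → ℕ}

theorem iterate_le_of_lt_sub (hpat : FollowsPattern α β m x) (hm : Monotone m) (k i : ℕ)
    (hi : i < m (k + 1) - m k) : (T α β)^[k + m k + 1 + i] x ≤ α := by
  refine ((hpat _).2 ?_).le
  rintro ⟨k', hk'⟩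
  rcases le_or_gt k' k with h | h
  · have := hm h
    omega
  · have : m (k + 1) ≤ m k' := hm h
    omega

theorem pow_mul_iterate_eq (hpat : FollowsPattern α β m x) (hm : Monotone m)
    (hα0 : α ≠ 0) (hα1 : α ≠ 1) (hβ : β ≠ 0) (k : ℕ) :
    (α / β) ^ m k * (T α β)^[k + m k] x =
      (α / β) ^ m k -
        (1 - α) / β * ((α / β) ^ m (k + 1) * (T α β)^[k + 1 + m (k + 1)] x) := by
  have hmk : m k ≤ m (k + 1) := hm (Nat.le_add_right k 1)
  have hright : 1 - (1 - α) / β * (T α β)^[k + m k + 1] x = (T α β)^[k + m k] x := by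
    rw [Function.iterate_succ_apply']
    exact one_sub_div_mul_T_of_lt hα1 hβ ((hpat _).1 ⟨k, rfl⟩)
  have hleft : (α / β) ^ (m (k + 1) - m k) * (T α β)^[m (k + 1) - m k]
      ((T α β)^[k + m k + 1] x) = (T α β)^[k + m k + 1] x := by
    refine pow_div_mul_iterate_T hα0 hβ fun i hi => ?_
    rw [← Function.iterate_add_apply, add_comm i]
    exact hpat.iterate_le_of_lt_sub hm k i hi
  rw [← Function.iterate_add_apply, show m (k + 1) - m k + (k + m k + 1) = k + 1 + m (k + 1) by
    omega] at hleft
  rw [← hright, ← hleft]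
  linear_combination -(1 - α) / β * (T α β)^[k + 1 + m (k + 1)] x *
    (pow_mul_pow_sub (α / β) hmk)

theorem hasSum (hpat : FollowsPattern α β m x) (hm0 : m 0 = 0) (hm : Monotone m)
    (hα : 1 - β < α) (hαβ : α < β) (hβ1 : β ≤ 1) (hx : x ∈ Set.Icc 0 1) :
    HasSum (fun k => ((α - 1) / β) ^ k * (α / β) ^ m k) x := by
  have hα0 : 0 < α := by linarith
  have hβ0 : 0 < β := hα0.trans hαβ
  have hα1 : α < 1 := hαβ.trans_le hβ1
  have hq0 : 0 ≤ α / β := (div_pos hα0 hβ0).le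
  have hq1 : α / β ≤ 1 := (div_le_one hβ0).2 hαβ.le
  have hr : |(α - 1) / β| < 1 := by
    rw [abs_div, abs_of_pos hβ0, abs_of_neg (by linarith), div_lt_one hβ0]
    linarith
  set z : ℕ → ℝ := fun k => ((α - 1) / β) ^ k * ((α / β) ^ m k * (T α β)^[k + m k] x)
  have hz : ∀ k, z k - z (k + 1) = ((α - 1) / β) ^ k * (α / β) ^ m k := fun k => by
    linear_combination ((α - 1) / β) ^ k *
      hpat.pow_mul_iterate_eq hm hα0.ne' hα1.ne hβ0.ne' k
  have horbit : ∀ n, |(T α β)^[n] x| ≤ 1 := fun n => by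
    obtain ⟨h0, h1⟩ := (T_mapsTo_Icc hα0 hα1 hβ0.le hβ1).iterate n hx
    exact abs_le.2 ⟨by linarith, h1⟩
  have hgeom := tendsto_pow_atTop_nhds_zero_of_lt_one (abs_nonneg _) hr
  have hz0 : Tendsto z atTop (𝓝 0) :=
    squeeze_zero_norm (fun k => abs_pow_mul_pow_mul_le hq0 hq1 (horbit _) _ _) hgeom
  have hsum : Summable fun k => ‖z k - z (k + 1)‖ := by
    refine .of_nonneg_of_le (fun _ => norm_nonneg _) (fun k => ?_)
      (summable_geometric_of_lt_one (abs_nonneg _) hr)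
    have := abs_pow_mul_pow_mul_le (r := (α - 1) / β) hq0 hq1 abs_one.le k (m k)
    rwa [mul_one, ← hz] at this
  simpa [z, hz, hm0] using hasSum_sub_succ hz0 hsum

end FollowsPattern

theorem theta_eq_sub_of_hasSum {m : ℕ → ℕ} {α β s : ℝ} (hm0 : m 0 = 0)
    (h : HasSum (fun k => ((α - 1) / β) ^ k * (α / β) ^ m k) s) : theta m α β = s - β := by
  rw [theta, ((hasSum_nat_add_iff' 1).2 h).tsum_eq]
  simp [hm0]

theorem stmt0_general (α β : ℝ) (hβ2 : β ≤ 1)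
    (hα1 : 1 - β < α) (hα2 : α < β)
    (m : ℕ → ℕ) (hm0 : m 0 = 0) (hmono : Monotone m)
    (hpat : ∀ n : ℕ,
      ((∃ k : ℕ, n = k + m k) → α < (T α β)^[n] β) ∧
      ((¬ ∃ k : ℕ, n = k + m k) → (T α β)^[n] β < α)) :
    theta m α β = 0 := by
  have hsum := FollowsPattern.hasSum hpat hm0 hmono hα1 hα2 hβ2 ⟨by linarith, hβ2⟩
  rw [theta_eq_sub_of_hasSum hm0 hsum, sub_self]

/-- If `(α,β) ∈ U` and `β` follows the pattern `R L^{m_1} R L^{m_2} ⋯` under `T_{α,β}`,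
then `Θ(α,β) = 0`. -/
theorem stmt0 (α β : ℝ) (hβ1 : 1 / 2 < β) (hβ2 : β ≤ 1)
    (hα1 : 1 - β < α) (hα2 : α < β)
    (m : ℕ → ℕ) (hm0 : m 0 = 0) (hm1 : 1 ≤ m 1) (hmono : Monotone m)
    (hpat : ∀ n : ℕ,
      ((∃ k : ℕ, n = k + m k) → α < (T α β)^[n] β) ∧
      ((¬ ∃ k : ℕ, n = k + m k) → (T α β)^[n] β < α)) :
    theta m α β = 0 :=
  stmt0_general α β hβ2 hα1 hα2 m hm0 hmono hpat
end

section
/- Define the sequence (m̄_k)_{k≥1} by m̄_1 = 6, m̄_{2k} = m̄_{2k+1} = 6 + 5k for 1 ≤ k ≤ 23, and m̄_k = 121 for all k ≥ 47, and let Θ be the associated function. Let α₀ = 0.4875. Then Θ(α₀, 0.535) < 0, Θ(α₀, 0.7) > 0 and Θ(α₀, 0.995) < 0; consequently the function t ↦ Θ(α₀, t), which is continuous on (1 − α₀, 1], has at least two zeros in the open interval (0.535, 0.995). -/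
/-!
Since `m̄` is constant from index 47 on, the tail of the series defining `Θ` is geometric, so
`Θ(α, ·)` equals an explicit rational function wherever the series converges. That closed form
is continuous and can be evaluated exactly at `0.535`, `0.7` and `0.995`; the two sign changes
then give two zeros by the intermediate value theorem.
-/

open Finset Set

/-- The sequence with `m̄_1 = 6`, `m̄_{2k} = m̄_{2k+1} = 6 + 5k` for `1 ≤ k ≤ 23`
and `m̄_k = 121` for `k ≥ 47`. -/
def mbar (k : ℕ) : ℕ :=
  if k = 0 then 0 else if k = 1 then 6 else if k ≤ 47 then 6 + 5 * (k / 2) else 121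

lemma mbar_of_lt {k : ℕ} (hk : 46 < k) : mbar k = 121 := by
  unfold mbar
  split_ifs <;> omega

lemma summable_pow_mul_pow (m : ℕ → ℕ) {r s : ℝ} (hr : |r| < 1) (hs : |s| ≤ 1) :
    Summable fun k : ℕ => r ^ (k + 1) * s ^ m (k + 1) := by
  refine .of_norm_bounded ((summable_geometric_of_lt_one (abs_nonneg r) hr).mul_left |r|)
    fun k => ?_
  rw [norm_mul, norm_pow, norm_pow, Real.norm_eq_abs, Real.norm_eq_abs, pow_succ']
  exact mul_le_of_le_one_right (by positivity) (pow_le_one₀ (abs_nonneg s) hs)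

lemma theta_eq_of_eventually_const {m : ℕ → ℕ} {N c : ℕ} (hm : ∀ k, N < k → m k = c)
    {α β : ℝ} (hr : |α - 1| < β) (hs : |α| ≤ β) :
    theta m α β = 1 - β + ∑ k ∈ range N, ((α - 1) / β) ^ (k + 1) * (α / β) ^ m (k + 1)
      + ((α - 1) / β) ^ (N + 1) * (α / β) ^ c / (1 - (α - 1) / β) := by
  have hβ : 0 < β := (abs_nonneg _).trans_lt hr
  have hr' : |(α - 1) / β| < 1 := by rwa [abs_div, abs_of_pos hβ, div_lt_one hβ]
  have hs' : |α / β| ≤ 1 := by rwa [abs_div, abs_of_pos hβ, div_le_one hβ]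
  have htail : ∀ k, ((α - 1) / β) ^ (k + N + 1) * (α / β) ^ m (k + N + 1)
      = ((α - 1) / β) ^ (N + 1) * (α / β) ^ c * ((α - 1) / β) ^ k := fun k => by
    rw [hm _ (by omega)]
    ring
  rw [theta, ← (summable_pow_mul_pow m hr' hs').sum_add_tsum_nat_add N]
  simp only [htail, tsum_mul_left, tsum_geometric_of_norm_lt_one (Real.norm_eq_abs _ ▸ hr')]
  ring

lemma continuousOn_theta_of_eventually_const {m : ℕ → ℕ} {N c : ℕ}
    (hm : ∀ k, N < k → m k = c) (α : ℝ) :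
    ContinuousOn (theta m α) {β | |α - 1| < β ∧ |α| ≤ β} := by
  refine ContinuousOn.congr ?_ fun β hβ => theta_eq_of_eventually_const hm hβ.1 hβ.2
  have hβ : ∀ β ∈ {β | |α - 1| < β ∧ |α| ≤ β}, β ≠ 0 :=
    fun β hβ => ((abs_nonneg _).trans_lt hβ.1).ne'
  have hden : ∀ β ∈ {β | |α - 1| < β ∧ |α| ≤ β}, 1 - (α - 1) / β ≠ 0 := fun β hβ => by
    have hβ0 : 0 < β := (abs_nonneg _).trans_lt hβ.1
    have : (α - 1) / β < 1 := (div_lt_one hβ0).2 ((le_abs_self _).trans_lt hβ.1)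
    linarith
  fun_prop (disch := assumption)

lemma exists_two_zeros_of_sign_changes {f : ℝ → ℝ} {a b c : ℝ} (hab : a < b) (hbc : b < c)
    (hf : ContinuousOn f (Icc a c)) (ha : f a < 0) (hb : 0 < f b) (hc : f c < 0) :
    ∃ t₁ t₂ : ℝ, t₁ ∈ Ioo a c ∧ t₂ ∈ Ioo a c ∧ t₁ ≠ t₂ ∧ f t₁ = 0 ∧ f t₂ = 0 := by
  obtain ⟨t₁, ht₁, hft₁⟩ :=
    intermediate_value_Ioo hab.le (hf.mono (Icc_subset_Icc_right hbc.le)) ⟨ha, hb⟩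
  obtain ⟨t₂, ht₂, hft₂⟩ :=
    intermediate_value_Ioo' hbc.le (hf.mono (Icc_subset_Icc_left hab.le)) ⟨hc, hb⟩
  exact ⟨t₁, t₂, ⟨ht₁.1, ht₁.2.trans hbc⟩, ⟨hab.trans ht₂.1, ht₂.2⟩,
    (ht₁.2.trans ht₂.1).ne, hft₁, hft₂⟩

lemma theta_mbar_eq {α β : ℝ} (hr : |α - 1| < β) (hs : |α| ≤ β) :
    theta mbar α β = 1 - β + ∑ k ∈ range 46, ((α - 1) / β) ^ (k + 1) * (α / β) ^ mbar (k + 1)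
      + ((α - 1) / β) ^ 47 * (α / β) ^ 121 / (1 - (α - 1) / β) :=
  theta_eq_of_eventually_const (fun _ => mbar_of_lt) hr hs

lemma Ioc_subset_convergence_region :
    Ioc (1 - 0.4875 : ℝ) 1 ⊆ {β : ℝ | |0.4875 - 1| < β ∧ |(0.4875 : ℝ)| ≤ β} := by
  intro β hβ
  have := hβ.1
  constructor <;> norm_num at this ⊢ <;> linarith

/-- With `α₀ = 0.4875`, `Θ(α₀, 0.535) < 0`, `Θ(α₀, 0.7) > 0`, `Θ(α₀, 0.995) < 0`;
consequently `t ↦ Θ(α₀,t)`, continuous on `(1-α₀, 1]`, has at least two zeros in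
`(0.535, 0.995)`. -/
theorem stmt2 :
    theta mbar 0.4875 0.535 < 0 ∧
    0 < theta mbar 0.4875 0.7 ∧
    theta mbar 0.4875 0.995 < 0 ∧
    ContinuousOn (fun t : ℝ => theta mbar 0.4875 t) (Set.Ioc (1 - 0.4875 : ℝ) 1) ∧
    ∃ t₁ t₂ : ℝ, t₁ ∈ Set.Ioo (0.535 : ℝ) 0.995 ∧ t₂ ∈ Set.Ioo (0.535 : ℝ) 0.995 ∧
      t₁ ≠ t₂ ∧ theta mbar 0.4875 t₁ = 0 ∧ theta mbar 0.4875 t₂ = 0 := by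
  have h₁ : theta mbar 0.4875 0.535 < 0 := by
    rw [theta_mbar_eq (by norm_num [abs_of_neg]) (by norm_num)]
    norm_num [sum_range_succ, mbar]
  have h₂ : 0 < theta mbar 0.4875 0.7 := by
    rw [theta_mbar_eq (by norm_num [abs_of_neg]) (by norm_num)]
    norm_num [sum_range_succ, mbar]
  have h₃ : theta mbar 0.4875 0.995 < 0 := by
    rw [theta_mbar_eq (by norm_num [abs_of_neg]) (by norm_num)]
    norm_num [sum_range_succ, mbar]
  have hcont : ContinuousOn (theta mbar 0.4875) (Ioc (1 - 0.4875 : ℝ) 1) :=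
    (continuousOn_theta_of_eventually_const (fun _ => mbar_of_lt) _).mono
      Ioc_subset_convergence_region
  refine ⟨h₁, h₂, h₃, hcont, exists_two_zeros_of_sign_changes (by norm_num) (by norm_num)
    (hcont.mono fun t ht => ⟨by norm_num at ht ⊢; linarith [ht.1], by linarith [ht.2]⟩)
    h₁ h₂ h₃⟩
end

section
/- Let C(α,β) = α⁵ − 2α⁴ + α³(β+1) − α²β − β⁵ + β⁴ and β₀ = 1/2 + √5/10. Then: (i) C(β,β) = 0 for every real β; (ii) β₀ is the unique β ∈ (1/2,1) with ∂_α C(β,β) = 0, and both first partial derivatives of C vanish at (β₀,β₀); (iii) if ε > 0 and Ψ : (β₀−ε, β₀+ε) → ℝ is differentiable at β₀ with Ψ(β₀) = β₀ and C(α, Ψ(α)) = 0 for all α ∈ (β₀−ε, β₀+ε), then Ψ′(β₀) = 1 or Ψ′(β₀) = −(√5+3)/(2√5+2). In particular, since −(√5+3)/(2√5+2) ≠ −1, the implicitly defined zero-level curve of C transversal to the diagonal is not orthogonal to the diagonal at (β₀,β₀). -/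
/-- The polynomial coming from the kneading sequence `RLLRC`. -/
noncomputable def Cpoly (a b : ℝ) : ℝ :=
  a ^ 5 - 2 * a ^ 4 + a ^ 3 * (b + 1) - a ^ 2 * b - b ^ 5 + b ^ 4

noncomputable def beta0 : ℝ := 1 / 2 + Real.sqrt 5 / 10

/-!
Both partial derivatives of `C` on the diagonal equal `±β²(5β² - 5β + 1)`, so the singular
points of the zero set of `C` on the diagonal are the roots `β₀` of `5β² - 5β + 1`.
Around such a point `C` is a quadratic form in `(α - β₀, β - β₀)` with polynomial coefficients;
dividing `C(α, Ψ α) = 0` by `(α - β₀)²` and letting `α → β₀` shows that the slope `m = Ψ'(β₀)`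
solves `(β₀ - 1/5) + (β₀ - 3/5) m + (4/5 - 2β₀) m² = 0`, whose roots are `1` and
`-(√5 + 3)/(2√5 + 2)`.
-/

open Filter Topology

theorem HasDerivAt.tangent_cone_eq_zero {Ψ A B D : ℝ → ℝ} {x₀ y₀ m : ℝ}
    (hΨ : HasDerivAt Ψ m x₀) (hΨx₀ : Ψ x₀ = y₀)
    (hA : ContinuousAt A x₀) (hB : ContinuousAt B x₀) (hD : ContinuousAt D x₀)
    (hzero : ∀ᶠ x in 𝓝 x₀,
      (x - x₀) ^ 2 * A x + (x - x₀) * (Ψ x - y₀) * B x + (Ψ x - y₀) ^ 2 * D x = 0) :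
    A x₀ + B x₀ * m + D x₀ * m ^ 2 = 0 := by
  have hslope : Tendsto (slope Ψ x₀) (𝓝[≠] x₀) (𝓝 m) := hasDerivAt_iff_tendsto_slope.mp hΨ
  have hlim : Tendsto (fun x => A x + B x * slope Ψ x₀ x + D x * slope Ψ x₀ x ^ 2) (𝓝[≠] x₀)
      (𝓝 (A x₀ + B x₀ * m + D x₀ * m ^ 2)) :=
    ((hA.tendsto.mono_left nhdsWithin_le_nhds).add
      ((hB.tendsto.mono_left nhdsWithin_le_nhds).mul hslope)).add
      ((hD.tendsto.mono_left nhdsWithin_le_nhds).mul (hslope.pow 2))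
  refine tendsto_nhds_unique hlim (tendsto_const_nhds.congr' ?_)
  filter_upwards [self_mem_nhdsWithin, nhdsWithin_le_nhds hzero] with x hx hx0
  have hne : x - x₀ ≠ 0 := sub_ne_zero.mpr hx
  rw [slope_def_field, hΨx₀]
  field_simp
  linear_combination -hx0

theorem Cpoly_self (b : ℝ) : Cpoly b b = 0 := by
  unfold Cpoly; ring

theorem hasDerivAt_Cpoly_left (b x : ℝ) :
    HasDerivAt (fun a => Cpoly a b) (5 * x ^ 4 - 8 * x ^ 3 + 3 * x ^ 2 * (b + 1) - 2 * x * b) x := by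
  have h := (((((hasDerivAt_pow 5 x).sub ((hasDerivAt_pow 4 x).const_mul 2)).add
    ((hasDerivAt_pow 3 x).mul_const (b + 1))).sub ((hasDerivAt_pow 2 x).mul_const b)).sub_const
    (b ^ 5)).add_const (b ^ 4)
  exact (h.congr_deriv (by norm_num; ring)).congr_of_eventuallyEq (.of_forall fun _ => rfl)

theorem hasDerivAt_Cpoly_right (a y : ℝ) :
    HasDerivAt (fun b => Cpoly a b) (a ^ 3 - a ^ 2 - 5 * y ^ 4 + 4 * y ^ 3) y := by
  have h := ((((((hasDerivAt_id y).add_const 1).const_mul (a ^ 3)).const_add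
    (a ^ 5 - 2 * a ^ 4)).sub ((hasDerivAt_id y).const_mul (a ^ 2))).sub (hasDerivAt_pow 5 y)).add
    (hasDerivAt_pow 4 y)
  exact (h.congr_deriv (by norm_num)).congr_of_eventuallyEq (.of_forall fun _ => rfl)

theorem deriv_Cpoly_left_self (b : ℝ) :
    deriv (fun a => Cpoly a b) b = b ^ 2 * (5 * b ^ 2 - 5 * b + 1) := by
  rw [(hasDerivAt_Cpoly_left b b).deriv]; ring

theorem deriv_Cpoly_right_self (b : ℝ) :
    deriv (fun y => Cpoly b y) b = -(b ^ 2 * (5 * b ^ 2 - 5 * b + 1)) := by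
  rw [(hasDerivAt_Cpoly_right b b).deriv]; ring

/-- The Taylor expansion of `C` at a singular diagonal point `(c, c)`, its coefficients reduced
modulo `5c² - 5c + 1`. -/
theorem Cpoly_eq_quadratic_form {c : ℝ} (hc : 5 * c ^ 2 - 5 * c + 1 = 0) (x y : ℝ) :
    Cpoly x y =
      (x - c) ^ 2 * ((c - 1 / 5) + (3 * c - 1) * ((x - c) + (y - c)) + (5 * c - 2) * (x - c) ^ 2
          + (x - c) * (y - c) + (x - c) ^ 3)
        + (x - c) * (y - c) * (c - 3 / 5)
        + (y - c) ^ 2 * ((4 / 5 - 2 * c) + (2 - 6 * c) * (y - c) + (1 - 5 * c) * (y - c) ^ 2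
          - (y - c) ^ 3) := by
  unfold Cpoly
  linear_combination (c ^ 2 * ((x - c) - (y - c)) + (2 * c + 1 / 5) * (x - c) ^ 2
    + 3 / 5 * (x - c) * (y - c) - (2 * c + 4 / 5) * (y - c) ^ 2 + 2 * (x - c) ^ 3
    - 2 * (y - c) ^ 3) * hc

theorem beta0_quadratic : 5 * beta0 ^ 2 - 5 * beta0 + 1 = 0 := by
  have hs : Real.sqrt 5 ^ 2 = 5 := Real.sq_sqrt (by norm_num)
  unfold beta0
  linear_combination hs / 20

theorem beta0_mem_Ioo : beta0 ∈ Set.Ioo (1 / 2 : ℝ) 1 := by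
  have hs : Real.sqrt 5 ^ 2 = 5 := Real.sq_sqrt (by norm_num)
  have hs0 : 0 < Real.sqrt 5 := Real.sqrt_pos.mpr (by norm_num)
  constructor <;> unfold beta0 <;> nlinarith

theorem quadratic_eq_zero_iff_eq_beta0 {b : ℝ} (hb : 1 / 2 < b) :
    5 * b ^ 2 - 5 * b + 1 = 0 ↔ b = beta0 := by
  refine ⟨fun h => ?_, fun h => h ▸ beta0_quadratic⟩
  have hfac : (b - beta0) * (b + beta0 - 1) = 0 := by
    linear_combination (h - beta0_quadratic) / 5
  have hpos : b + beta0 - 1 ≠ 0 := by linarith [beta0_mem_Ioo.1]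
  exact sub_eq_zero.mp ((mul_eq_zero.mp hfac).resolve_right hpos)

theorem HasDerivAt.slope_quadratic_of_Cpoly_eq_zero {Ψ : ℝ → ℝ} {m : ℝ}
    (hΨ : HasDerivAt Ψ m beta0) (hΨβ₀ : Ψ beta0 = beta0)
    (hzero : ∀ᶠ a in 𝓝 beta0, Cpoly a (Ψ a) = 0) :
    (beta0 - 1 / 5) + (beta0 - 3 / 5) * m + (4 / 5 - 2 * beta0) * m ^ 2 = 0 := by
  set c := beta0
  have hcont : ContinuousAt Ψ c := hΨ.continuousAt
  have := hΨ.tangent_cone_eq_zero hΨβ₀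
    (A := fun x => (c - 1 / 5) + (3 * c - 1) * ((x - c) + (Ψ x - c)) + (5 * c - 2) * (x - c) ^ 2
      + (x - c) * (Ψ x - c) + (x - c) ^ 3)
    (B := fun _ => c - 3 / 5)
    (D := fun x => (4 / 5 - 2 * c) + (2 - 6 * c) * (Ψ x - c) + (1 - 5 * c) * (Ψ x - c) ^ 2
      - (Ψ x - c) ^ 3)
    (by fun_prop) (by fun_prop) (by fun_prop)
    (hzero.mono fun x hx => (Cpoly_eq_quadratic_form beta0_quadratic x (Ψ x)).symm.trans hx)
  simpa [hΨβ₀] using this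

theorem eq_one_or_eq_of_slope_quadratic {m : ℝ}
    (h : (beta0 - 1 / 5) + (beta0 - 3 / 5) * m + (4 / 5 - 2 * beta0) * m ^ 2 = 0) :
    m = 1 ∨ m = -((Real.sqrt 5 + 3) / (2 * Real.sqrt 5 + 2)) := by
  have hfac : (m - 1) * ((4 - 10 * beta0) * m + (1 - 5 * beta0)) = 0 := by
    linear_combination 5 * h
  refine (mul_eq_zero.mp hfac).imp (fun h1 => by linarith) (fun h2 => ?_)
  have hden : 2 * Real.sqrt 5 + 2 ≠ 0 := by positivity
  unfold beta0 at h2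
  field_simp
  linear_combination -2 * h2

theorem slope_ne_neg_one : -((Real.sqrt 5 + 3) / (2 * Real.sqrt 5 + 2)) ≠ -1 := by
  have hs : Real.sqrt 5 ^ 2 = 5 := Real.sq_sqrt (by norm_num)
  have hden : 2 * Real.sqrt 5 + 2 ≠ 0 := by positivity
  rw [Ne, neg_inj, div_eq_one_iff_eq hden]
  intro h
  nlinarith

/-- (i) `C` vanishes on the diagonal; (ii) `β₀ = 1/2 + √5/10` is the unique `β ∈ (1/2,1)`
with `∂_α C(β,β) = 0`, and both first partials of `C` vanish at `(β₀,β₀)`;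
(iii) any curve `(α, Ψ(α))` in the zero set of `C` through `(β₀,β₀)`, differentiable at `β₀`,
has slope `1` or `-(√5+3)/(2√5+2)` there; moreover `-(√5+3)/(2√5+2) ≠ -1`, so the curve
transversal to the diagonal is not orthogonal to it. -/
theorem stmt3 :
    (∀ b : ℝ, Cpoly b b = 0) ∧
    beta0 ∈ Set.Ioo (1 / 2 : ℝ) 1 ∧
    (∀ b ∈ Set.Ioo (1 / 2 : ℝ) 1, (deriv (fun a => Cpoly a b) b = 0 ↔ b = beta0)) ∧
    deriv (fun a => Cpoly a beta0) beta0 = 0 ∧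
    deriv (fun b => Cpoly beta0 b) beta0 = 0 ∧
    (∀ ε > (0 : ℝ), ∀ Ψ : ℝ → ℝ, DifferentiableAt ℝ Ψ beta0 → Ψ beta0 = beta0 →
      (∀ a ∈ Set.Ioo (beta0 - ε) (beta0 + ε), Cpoly a (Ψ a) = 0) →
      deriv Ψ beta0 = 1 ∨ deriv Ψ beta0 = -((Real.sqrt 5 + 3) / (2 * Real.sqrt 5 + 2))) ∧
    -((Real.sqrt 5 + 3) / (2 * Real.sqrt 5 + 2)) ≠ -1 := by
  refine ⟨Cpoly_self, beta0_mem_Ioo, fun b hb => ?_, ?_, ?_, fun ε hε Ψ hΨ hΨβ₀ hzero => ?_,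
    slope_ne_neg_one⟩
  · have hb0 : b ^ 2 ≠ 0 := pow_ne_zero 2 (by linarith [hb.1])
    rw [deriv_Cpoly_left_self, mul_eq_zero, or_iff_right hb0, quadratic_eq_zero_iff_eq_beta0 hb.1]
  · rw [deriv_Cpoly_left_self, beta0_quadratic, mul_zero]
  · rw [deriv_Cpoly_right_self, beta0_quadratic, mul_zero, neg_zero]
  · have hnhds : Set.Ioo (beta0 - ε) (beta0 + ε) ∈ 𝓝 beta0 :=
      Ioo_mem_nhds (by linarith) (by linarith)
    exact eq_one_or_eq_of_slope_quadratic
      (hΨ.hasDerivAt.slope_quadratic_of_Cpoly_eq_zero hΨβ₀ (eventually_of_mem hnhds hzero))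
end

section
/- For each β ∈ (1/2,1) let (m̄_k^β)_{k≥1} be a nondecreasing sequence of positive integers satisfying m̄_k^β ≤ k·m̄_1^β for all k ≥ 1 and β/(1−β) − 2 < m̄_1^β < β/(1−β) + 1. Set r = r(β) = (β−1)/β. Then, as β → 1⁻: (a) β(1−β) · (1/β²) Σ_{k=1}^∞ [k(k−1) r^{k−2} + 2k m̄_k^β r^{k−1} + m̄_k^β(m̄_k^β−1) r^k] → 1; (b) β(1−β) · (1/β²) Σ_{k=1}^∞ [−k(k+m̄_k^β) r^{k−1} − m̄_k^β(k+m̄_k^β) r^k] → 0; (c) β(1−β) · (1/β²) Σ_{k=1}^∞ (k+m̄_k^β)(k+m̄_k^β+1) r^k → −1. (These three sums are, respectively, ∂²_α Θ^β, ∂_α∂_β Θ^β and ∂²_β Θ^β evaluated at the diagonal point (β,β); hence the rescaled second differential of Θ^β at (β,β) converges to the quadratic form x² − y² as β → 1⁻.) -/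
/-!
Put `x = (1 - β)/β`, so that the rescaling factor `β(1 - β)/β²` is `x` and `r = -x`. The bounds on
`m̄₁` give `x m̄₁ → 1` and, with `m̄_k ≤ k m̄₁`, also `x m̄_k ≤ 2k`. Hence the `k`-th summand is
`O(k² xᵏ⁻²)` for `k ≥ 2`, so the tail stays bounded and dies after multiplication by `x`, while
`x` times the first summand is a polynomial in `x` and `x m̄₁` whose limit is `1`, `0`, `-1`.
-/

open Filter Topology Set

-- The summands of `∂²_α Θ^β`, `∂_α∂_β Θ^β`, `∂²_β Θ^β` at `(β, β)`, indexed by `k - 1` for the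
-- paper's `k ≥ 1`, with `M = m̄_k^β` and `r = (β - 1)/β`. In `termAA 0` the exponent `0 - 1`
-- truncates to `0`, harmlessly, since that term carries the factor `0`.
noncomputable def termAA (j : ℕ) (M r : ℝ) : ℝ :=
  ((j : ℝ) + 1) * j * r ^ (j - 1) + 2 * ((j : ℝ) + 1) * M * r ^ j + M * (M - 1) * r ^ (j + 1)

noncomputable def termAB (j : ℕ) (M r : ℝ) : ℝ :=
  -(((j : ℝ) + 1) * (((j : ℝ) + 1) + M) * r ^ j) - M * (((j : ℝ) + 1) + M) * r ^ (j + 1)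

noncomputable def termBB (j : ℕ) (M r : ℝ) : ℝ :=
  (((j : ℝ) + 1) + M) * ((((j : ℝ) + 1) + M) + 1) * r ^ (j + 1)

lemma summable_add_two_sq_mul_geometric {ρ : ℝ} (hρ : |ρ| < 1) :
    Summable fun j : ℕ => ((j : ℝ) + 2) ^ 2 * ρ ^ j := by
  have h : ‖ρ‖ < 1 := hρ
  refine (((summable_pow_mul_geometric_of_norm_lt_one 2 h).add
    ((summable_pow_mul_geometric_of_norm_lt_one 1 h).mul_left 4)).add
    ((summable_pow_mul_geometric_of_norm_lt_one 0 h).mul_left 4)).congr fun j => ?_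
  ring

lemma summable_of_abs_le_sq_geometric {G : ℕ → ℝ} {C ρ : ℝ} (hρ : |ρ| < 1)
    (hG : ∀ j, |G j| ≤ C * ((j : ℝ) + 2) ^ 2 * |ρ| ^ j) : Summable G := by
  refine .of_norm_bounded
    ((summable_add_two_sq_mul_geometric (ρ := |ρ|) (by rwa [abs_abs])).mul_left C) fun j => ?_
  rw [Real.norm_eq_abs, ← mul_assoc]
  exact hG j

lemma abs_tsum_le_of_abs_le_sq_geometric {G : ℕ → ℝ} {C ρ : ℝ} (hρ : |ρ| ≤ 1 / 2)
    (hG : ∀ j, |G j| ≤ C * ((j : ℝ) + 2) ^ 2 * |ρ| ^ j) :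
    |∑' j, G j| ≤ C * ∑' j : ℕ, ((j : ℝ) + 2) ^ 2 * (1 / 2) ^ j := by
  have hC : 0 ≤ C := by
    have h0 := (abs_nonneg (G 0)).trans (hG 0)
    norm_num at h0
    linarith
  have hsum := (summable_add_two_sq_mul_geometric (ρ := |ρ|)
    (by rw [abs_abs]; linarith)).mul_left C
  calc |∑' j, G j| ≤ ∑' j : ℕ, C * (((j : ℝ) + 2) ^ 2 * |ρ| ^ j) :=
        tsum_of_norm_bounded hsum.hasSum fun j => by rw [Real.norm_eq_abs, ← mul_assoc]; exact hG j
    _ ≤ ∑' j : ℕ, C * (((j : ℝ) + 2) ^ 2 * (1 / 2) ^ j) := by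
        refine hsum.tsum_le_tsum (fun j => ?_) ((summable_add_two_sq_mul_geometric
          (by norm_num)).mul_left C)
        gcongr
    _ = C * ∑' j : ℕ, ((j : ℝ) + 2) ^ 2 * (1 / 2) ^ j := tsum_mul_left

lemma tendsto_mul_tsum_of_tendsto_mul_head {α : Type*} {l : Filter α} {c : α → ℝ}
    {F : α → ℕ → ℝ} {C L : ℝ} (hc : Tendsto c l (𝓝 0))
    (htail : ∀ᶠ a in l, ∀ j, |F a (j + 1)| ≤ C * ((j : ℝ) + 2) ^ 2 * |c a| ^ j)
    (hhead : Tendsto (fun a => c a * F a 0) l (𝓝 L)) :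
    Tendsto (fun a => c a * ∑' j, F a j) l (𝓝 L) := by
  have hsmall : ∀ᶠ a in l, |c a| ≤ 1 / 2 := by
    filter_upwards [hc.eventually (Metric.closedBall_mem_nhds (0 : ℝ)
      (by norm_num : (0 : ℝ) < 1 / 2))] with a ha
    simpa using ha
  have htail_zero : Tendsto (fun a => c a * ∑' j, F a (j + 1)) l (𝓝 0) := by
    refine squeeze_zero_norm' (a := fun a => |c a| *
      (C * ∑' j : ℕ, ((j : ℝ) + 2) ^ 2 * (1 / 2) ^ j)) ?_ ?_
    · filter_upwards [htail, hsmall] with a ha hca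
      rw [norm_mul, Real.norm_eq_abs]
      exact mul_le_mul_of_nonneg_left (abs_tsum_le_of_abs_le_sq_geometric hca ha) (abs_nonneg _)
    · simpa using hc.abs.mul_const (C * ∑' j : ℕ, ((j : ℝ) + 2) ^ 2 * (1 / 2) ^ j)
  refine (by simpa using hhead.add htail_zero : Tendsto _ l (𝓝 L)).congr' ?_
  filter_upwards [htail, hsmall] with a ha hca
  rw [(summable_nat_add_iff 1).mp
    (summable_of_abs_le_sq_geometric (hca.trans_lt (by norm_num)) ha) |>.tsum_eq_zero_add]
  ring

lemma tendsto_rescaled_tsum {F : ℝ → ℕ → ℝ} {C L : ℝ}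
    (htail : ∀ β ∈ Ioo (1 / 2 : ℝ) 1, ∀ j,
      |F β (j + 1)| ≤ C * ((j : ℝ) + 2) ^ 2 * |(β - 1) / β| ^ j)
    (hhead : Tendsto (fun β => (1 - β) / β * F β 0) (𝓝[<] 1) (𝓝 L)) :
    Tendsto (fun β : ℝ => β * (1 - β) * (1 / β ^ 2) * ∑' j, F β j) (𝓝[<] 1) (𝓝 L) := by
  have hne : ∀ᶠ β in 𝓝[<] (1 : ℝ), β ∈ Ioo (1 / 2 : ℝ) 1 := Ioo_mem_nhdsLT (by norm_num)
  have hc : ∀ᶠ β in 𝓝[<] (1 : ℝ), β * (1 - β) * (1 / β ^ 2) = (1 - β) / β := by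
    filter_upwards [hne] with β hβ
    field_simp [(show β ≠ 0 by linarith [hβ.1])]
  refine tendsto_mul_tsum_of_tendsto_mul_head (C := C) ?_ ?_ (hhead.congr' (hc.mono ?_))
  · have : ContinuousAt (fun β : ℝ => β * (1 - β) * (1 / β ^ 2)) 1 := by
      fun_prop (disch := norm_num)
    simpa using this.tendsto.mono_left nhdsWithin_le_nhds
  · filter_upwards [hne, hc] with β hβ hcβ j
    rw [hcβ, show (1 - β) / β = -((β - 1) / β) by ring, abs_neg]
    exact htail β hβ j
  · intro β h
    simp only [h]

lemma tendsto_one_sub_div_self_nhdsLT_one :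
    Tendsto (fun β : ℝ => (1 - β) / β) (𝓝[<] 1) (𝓝 0) := by
  have : ContinuousAt (fun β : ℝ => (1 - β) / β) 1 := by fun_prop (disch := norm_num)
  simpa using this.tendsto.mono_left nhdsWithin_le_nhds

lemma abs_natCast_mul_le_two_mul {β : ℝ} (hβ : β ∈ Ioo (1 / 2 : ℝ) 1) {M₁ M k : ℕ}
    (hM₁ : (M₁ : ℝ) < β / (1 - β) + 1) (hM : M ≤ k * M₁) :
    |(M : ℝ) * ((β - 1) / β)| ≤ 2 * k := by
  obtain ⟨hβ₁, hβ₂⟩ := hβ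
  have hx : 0 < (1 - β) / β := div_pos (by linarith) (by linarith)
  have hx₁ : (1 - β) / β < 1 := (div_lt_one (by linarith)).mpr (by linarith)
  have hxM₁ : (1 - β) / β * M₁ < 2 := by
    calc (1 - β) / β * M₁ < (1 - β) / β * (β / (1 - β) + 1) := by gcongr
      _ = 1 + (1 - β) / β := by field_simp [(show 1 - β ≠ 0 by linarith)]
      _ < 2 := by linarith
  have hMk : (M : ℝ) ≤ k * M₁ := by exact_mod_cast hM
  rw [show (β - 1) / β = -((1 - β) / β) by ring, mul_neg, abs_neg,
    abs_of_nonneg (by positivity)]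
  nlinarith [Nat.cast_nonneg (α := ℝ) k]

lemma one_sub_div_self_mul_mem_Icc {β μ : ℝ} (hβ : β ∈ Ioo (1 / 2 : ℝ) 1)
    (hμ : β / (1 - β) - 2 < μ ∧ μ < β / (1 - β) + 1) :
    (1 - β) / β * μ ∈ Icc (1 - 2 * ((1 - β) / β)) (1 + (1 - β) / β) := by
  obtain ⟨hβ₁, hβ₂⟩ := hβ
  have hx : 0 < (1 - β) / β := div_pos (by linarith) (by linarith)
  have hid : (1 - β) / β * (β / (1 - β)) = 1 := by
    field_simp [(show 1 - β ≠ 0 by linarith), (show β ≠ 0 by linarith)]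
  constructor <;> nlinarith [hμ.1, hμ.2]

lemma tendsto_one_sub_div_self_mul_nhdsLT_one {μ : ℝ → ℝ}
    (hμ : ∀ β ∈ Ioo (1 / 2 : ℝ) 1, β / (1 - β) - 2 < μ β ∧ μ β < β / (1 - β) + 1) :
    Tendsto (fun β => (1 - β) / β * μ β) (𝓝[<] 1) (𝓝 1) := by
  have hx := tendsto_one_sub_div_self_nhdsLT_one
  have hmem : ∀ᶠ β in 𝓝[<] (1 : ℝ), (1 - β) / β * μ β ∈
      Icc (1 - 2 * ((1 - β) / β)) (1 + (1 - β) / β) := by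
    filter_upwards [Ioo_mem_nhdsLT (show (1 / 2 : ℝ) < 1 by norm_num)] with β hβ
    exact one_sub_div_self_mul_mem_Icc hβ (hμ β hβ)
  exact tendsto_of_tendsto_of_tendsto_of_le_of_le'
    (by simpa using (hx.const_mul 2).const_sub 1) (by simpa using hx.const_add 1)
    (hmem.mono fun _ h => h.1) (hmem.mono fun _ h => h.2)

lemma tendsto_rescaled_tsum_of_abs_le {T : ℕ → ℝ → ℝ → ℝ} {C L : ℝ} (m : ℝ → ℕ → ℕ)
    (hlin : ∀ β ∈ Ioo (1 / 2 : ℝ) 1, ∀ k : ℕ, 1 ≤ k → m β k ≤ k * m β 1)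
    (hm1 : ∀ β ∈ Ioo (1 / 2 : ℝ) 1,
      β / (1 - β) - 2 < (m β 1 : ℝ) ∧ (m β 1 : ℝ) < β / (1 - β) + 1)
    (hT : ∀ (j : ℕ) (M r : ℝ), |r| ≤ 1 → |M * r| ≤ 2 * ((j : ℝ) + 2) →
      |T (j + 1) M r| ≤ C * ((j : ℝ) + 2) ^ 2 * |r| ^ j)
    (hhead : Tendsto (fun β => (1 - β) / β * T 0 (m β 1) ((β - 1) / β)) (𝓝[<] 1) (𝓝 L)) :
    Tendsto (fun β : ℝ => β * (1 - β) * (1 / β ^ 2) * ∑' j, T j (m β (j + 1)) ((β - 1) / β))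
      (𝓝[<] 1) (𝓝 L) := by
  refine tendsto_rescaled_tsum (C := C) (fun β hβ j => hT _ _ _ ?_ ?_) hhead
  · obtain ⟨hβ₁, hβ₂⟩ := hβ
    rw [abs_le, le_div_iff₀ (by linarith), div_le_one (by linarith)]
    constructor <;> linarith
  · exact_mod_cast abs_natCast_mul_le_two_mul hβ (hm1 β hβ).2 (hlin β hβ (j + 2) (by omega))

section Terms

variable {j : ℕ} {M r : ℝ}

lemma abs_termAA_succ_le (hr : |r| ≤ 1) (hM : |M * r| ≤ 2 * ((j : ℝ) + 2)) :
    |termAA (j + 1) M r| ≤ 12 * ((j : ℝ) + 2) ^ 2 * |r| ^ j := by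
  have h : termAA (j + 1) M r = r ^ j * (((j : ℝ) + 2) * ((j : ℝ) + 2 - 1)
      + 2 * ((j : ℝ) + 2) * (M * r) + M * r * (M * r - r)) := by
    simp only [termAA, Nat.add_sub_cancel]
    push_cast
    ring
  rw [h, abs_mul, abs_pow, mul_comm]
  refine mul_le_mul_of_nonneg_right ?_ (by positivity)
  rw [abs_le] at *
  constructor <;> nlinarith

lemma abs_add_two_mul_add_mul_le (hr : |r| ≤ 1) (hM : |M * r| ≤ 2 * ((j : ℝ) + 2)) :
    |((j : ℝ) + 2) * r + M * r| ≤ 3 * ((j : ℝ) + 2) := by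
  have ha : (0 : ℝ) ≤ (j : ℝ) + 2 := by positivity
  have har : |((j : ℝ) + 2) * r| ≤ (j : ℝ) + 2 := by
    rw [abs_mul, abs_of_nonneg ha]
    exact mul_le_of_le_one_right ha hr
  linarith [abs_add_le (((j : ℝ) + 2) * r) (M * r)]

lemma abs_termAB_succ_le (hr : |r| ≤ 1) (hM : |M * r| ≤ 2 * ((j : ℝ) + 2)) :
    |termAB (j + 1) M r| ≤ 12 * ((j : ℝ) + 2) ^ 2 * |r| ^ j := by
  have h : termAB (j + 1) M r =
      r ^ j * -((((j : ℝ) + 2) * r + M * r) * (((j : ℝ) + 2) + M * r)) := by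
    simp only [termAB]
    push_cast
    ring
  have hsum : |((j : ℝ) + 2) + M * r| ≤ 3 * ((j : ℝ) + 2) := by
    linarith [abs_add_le ((j : ℝ) + 2) (M * r), abs_of_nonneg (by positivity : (0 : ℝ) ≤ j + 2)]
  rw [h, abs_mul, abs_pow, abs_neg, abs_mul, mul_comm]
  refine mul_le_mul_of_nonneg_right ?_ (by positivity)
  calc _ ≤ 3 * ((j : ℝ) + 2) * (3 * ((j : ℝ) + 2)) :=
        mul_le_mul (abs_add_two_mul_add_mul_le hr hM) hsum (abs_nonneg _) (by positivity)
    _ ≤ 12 * ((j : ℝ) + 2) ^ 2 := by nlinarith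

lemma abs_termBB_succ_le (hr : |r| ≤ 1) (hM : |M * r| ≤ 2 * ((j : ℝ) + 2)) :
    |termBB (j + 1) M r| ≤ 12 * ((j : ℝ) + 2) ^ 2 * |r| ^ j := by
  have h : termBB (j + 1) M r =
      r ^ j * ((((j : ℝ) + 2) * r + M * r) * (((j : ℝ) + 2) * r + M * r + r)) := by
    simp only [termBB]
    push_cast
    ring
  have hp := abs_add_two_mul_add_mul_le hr hM
  have hsum : |((j : ℝ) + 2) * r + M * r + r| ≤ 4 * ((j : ℝ) + 2) := by
    linarith [abs_add_le (((j : ℝ) + 2) * r + M * r) r]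
  rw [h, abs_mul, abs_pow, abs_mul, mul_comm]
  refine mul_le_mul_of_nonneg_right ?_ (by positivity)
  calc _ ≤ 3 * ((j : ℝ) + 2) * (4 * ((j : ℝ) + 2)) :=
        mul_le_mul hp hsum (abs_nonneg _) (by positivity)
    _ = 12 * ((j : ℝ) + 2) ^ 2 := by ring

end Terms

-- With `x = (1 - β)/β → 0` and `u = x m̄₁ → 1`, the rescaled first terms are
-- `2u - u(u - x)`, `u(x + u) - (x + u)` and `-(x + u)(2x + u)`.

lemma tendsto_rescaled_tsum_termAA (m : ℝ → ℕ → ℕ)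
    (hlin : ∀ β ∈ Ioo (1 / 2 : ℝ) 1, ∀ k : ℕ, 1 ≤ k → m β k ≤ k * m β 1)
    (hm1 : ∀ β ∈ Ioo (1 / 2 : ℝ) 1,
      β / (1 - β) - 2 < (m β 1 : ℝ) ∧ (m β 1 : ℝ) < β / (1 - β) + 1) :
    Tendsto (fun β : ℝ => β * (1 - β) * (1 / β ^ 2) * ∑' j, termAA j (m β (j + 1)) ((β - 1) / β))
      (𝓝[<] 1) (𝓝 1) := by
  refine tendsto_rescaled_tsum_of_abs_le m hlin hm1 (fun _ _ _ => abs_termAA_succ_le) ?_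
  have hx := tendsto_one_sub_div_self_nhdsLT_one
  have hu := tendsto_one_sub_div_self_mul_nhdsLT_one hm1
  have h := (hu.const_mul 2).sub (hu.mul (hu.sub hx))
  norm_num at h
  refine h.congr fun β => ?_
  simp only [termAA]
  ring

lemma tendsto_rescaled_tsum_termAB (m : ℝ → ℕ → ℕ)
    (hlin : ∀ β ∈ Ioo (1 / 2 : ℝ) 1, ∀ k : ℕ, 1 ≤ k → m β k ≤ k * m β 1)
    (hm1 : ∀ β ∈ Ioo (1 / 2 : ℝ) 1,
      β / (1 - β) - 2 < (m β 1 : ℝ) ∧ (m β 1 : ℝ) < β / (1 - β) + 1) :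
    Tendsto (fun β : ℝ => β * (1 - β) * (1 / β ^ 2) * ∑' j, termAB j (m β (j + 1)) ((β - 1) / β))
      (𝓝[<] 1) (𝓝 0) := by
  refine tendsto_rescaled_tsum_of_abs_le m hlin hm1 (fun _ _ _ => abs_termAB_succ_le) ?_
  have hx := tendsto_one_sub_div_self_nhdsLT_one
  have hu := tendsto_one_sub_div_self_mul_nhdsLT_one hm1
  have h := (hu.mul (hx.add hu)).sub (hx.add hu)
  norm_num at h
  refine h.congr fun β => ?_
  simp only [termAB]
  ring

lemma tendsto_rescaled_tsum_termBB (m : ℝ → ℕ → ℕ)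
    (hlin : ∀ β ∈ Ioo (1 / 2 : ℝ) 1, ∀ k : ℕ, 1 ≤ k → m β k ≤ k * m β 1)
    (hm1 : ∀ β ∈ Ioo (1 / 2 : ℝ) 1,
      β / (1 - β) - 2 < (m β 1 : ℝ) ∧ (m β 1 : ℝ) < β / (1 - β) + 1) :
    Tendsto (fun β : ℝ => β * (1 - β) * (1 / β ^ 2) * ∑' j, termBB j (m β (j + 1)) ((β - 1) / β))
      (𝓝[<] 1) (𝓝 (-1)) := by
  refine tendsto_rescaled_tsum_of_abs_le m hlin hm1 (fun _ _ _ => abs_termBB_succ_le) ?_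
  have hx := tendsto_one_sub_div_self_nhdsLT_one
  have hu := tendsto_one_sub_div_self_mul_nhdsLT_one hm1
  have h := (hx.add hu).mul ((hx.const_mul 2).add hu)
  norm_num at h
  refine h.neg.congr fun β => ?_
  simp only [termBB]
  ring

theorem stmt5_general (m : ℝ → ℕ → ℕ)
    (hlin : ∀ β ∈ Set.Ioo (1 / 2 : ℝ) 1, ∀ k : ℕ, 1 ≤ k → m β k ≤ k * m β 1)
    (hm1 : ∀ β ∈ Set.Ioo (1 / 2 : ℝ) 1,
      β / (1 - β) - 2 < (m β 1 : ℝ) ∧ (m β 1 : ℝ) < β / (1 - β) + 1) :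
    Tendsto (fun β : ℝ => β * (1 - β) * (1 / β ^ 2) *
        ∑' j : ℕ, (((j : ℝ) + 1) * j * ((β - 1) / β) ^ (j - 1)
          + 2 * ((j : ℝ) + 1) * (m β (j + 1) : ℝ) * ((β - 1) / β) ^ j
          + (m β (j + 1) : ℝ) * ((m β (j + 1) : ℝ) - 1) * ((β - 1) / β) ^ (j + 1)))
      (𝓝[<] (1 : ℝ)) (𝓝 1) ∧
    Tendsto (fun β : ℝ => β * (1 - β) * (1 / β ^ 2) *
        ∑' j : ℕ, (-(((j : ℝ) + 1) * (((j : ℝ) + 1) + (m β (j + 1) : ℝ))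
            * ((β - 1) / β) ^ j)
          - (m β (j + 1) : ℝ) * (((j : ℝ) + 1) + (m β (j + 1) : ℝ))
            * ((β - 1) / β) ^ (j + 1)))
      (𝓝[<] (1 : ℝ)) (𝓝 0) ∧
    Tendsto (fun β : ℝ => β * (1 - β) * (1 / β ^ 2) *
        ∑' j : ℕ, ((((j : ℝ) + 1) + (m β (j + 1) : ℝ))
          * ((((j : ℝ) + 1) + (m β (j + 1) : ℝ)) + 1) * ((β - 1) / β) ^ (j + 1)))
      (𝓝[<] (1 : ℝ)) (𝓝 (-1)) :=
  ⟨tendsto_rescaled_tsum_termAA m hlin hm1, tendsto_rescaled_tsum_termAB m hlin hm1,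
    tendsto_rescaled_tsum_termBB m hlin hm1⟩

/-- For each `β ∈ (1/2,1)` fix a nondecreasing sequence of positive integers
`(m̄_k^β)` with `m̄_k^β ≤ k·m̄_1^β` and `β/(1-β) - 2 < m̄_1^β < β/(1-β) + 1`.
With `r = (β-1)/β`, the three rescaled sums (the rescaled second partials
`∂²_α Θ^β`, `∂_α∂_β Θ^β`, `∂²_β Θ^β` at `(β,β)`) tend to `1`, `0`, `-1`
respectively as `β → 1⁻`. -/
theorem stmt5 (m : ℝ → ℕ → ℕ)
    (hpos : ∀ β ∈ Set.Ioo (1 / 2 : ℝ) 1, ∀ k : ℕ, 1 ≤ k → 1 ≤ m β k)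
    (hmono : ∀ β ∈ Set.Ioo (1 / 2 : ℝ) 1, ∀ k l : ℕ, 1 ≤ k → k ≤ l → m β k ≤ m β l)
    (hlin : ∀ β ∈ Set.Ioo (1 / 2 : ℝ) 1, ∀ k : ℕ, 1 ≤ k → m β k ≤ k * m β 1)
    (hm1 : ∀ β ∈ Set.Ioo (1 / 2 : ℝ) 1,
      β / (1 - β) - 2 < (m β 1 : ℝ) ∧ (m β 1 : ℝ) < β / (1 - β) + 1) :
    Tendsto (fun β : ℝ => β * (1 - β) * (1 / β ^ 2) *
        ∑' j : ℕ, (((j : ℝ) + 1) * j * ((β - 1) / β) ^ (j - 1)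
          + 2 * ((j : ℝ) + 1) * (m β (j + 1) : ℝ) * ((β - 1) / β) ^ j
          + (m β (j + 1) : ℝ) * ((m β (j + 1) : ℝ) - 1) * ((β - 1) / β) ^ (j + 1)))
      (𝓝[<] (1 : ℝ)) (𝓝 1) ∧
    Tendsto (fun β : ℝ => β * (1 - β) * (1 / β ^ 2) *
        ∑' j : ℕ, (-(((j : ℝ) + 1) * (((j : ℝ) + 1) + (m β (j + 1) : ℝ))
            * ((β - 1) / β) ^ j)
          - (m β (j + 1) : ℝ) * (((j : ℝ) + 1) + (m β (j + 1) : ℝ))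
            * ((β - 1) / β) ^ (j + 1)))
      (𝓝[<] (1 : ℝ)) (𝓝 0) ∧
    Tendsto (fun β : ℝ => β * (1 - β) * (1 / β ^ 2) *
        ∑' j : ℕ, ((((j : ℝ) + 1) + (m β (j + 1) : ℝ))
          * ((((j : ℝ) + 1) + (m β (j + 1) : ℝ)) + 1) * ((β - 1) / β) ^ (j + 1)))
      (𝓝[<] (1 : ℝ)) (𝓝 (-1)) :=
  stmt5_general m hlin hm1
end

section
/- Let M and M̃ be admissible sequences such that M, M̃, M⁻ and M̃⁻ are all maximal with respect to the parity-lexicographic order ⪯. If M ⪯ M̃, then M⁻ ⪯ M̃⁻. -/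
/-- The symbol alphabet `{L, C, R}`. -/
inductive Symb : Type
  | L : Symb
  | C : Symb
  | R : Symb
  deriving DecidableEq

/-- Numerical value realizing the order `L < C < R`. -/
def Symb.toNat : Symb → ℕ
  | Symb.L => 0
  | Symb.C => 1
  | Symb.R => 2

/-- Number of `R`'s among the first `n` entries of `A`. -/
def countR (A : ℕ → Symb) (n : ℕ) : ℕ :=
  ((Finset.range n).filter fun i => A i = Symb.R).card

/-- Parity-lexicographic order `A ⪯ B`. -/
def ple (A B : ℕ → Symb) : Prop :=
  A = B ∨ ∃ n : ℕ, (∀ i < n, A i = B i) ∧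
    ((Even (countR A n) ∧ (A n).toNat < (B n).toNat) ∨
     (¬ Even (countR A n) ∧ (B n).toNat < (A n).toNat))

/-- `A` is maximal: every shift of `A` is `⪯ A`. -/
def maximal (A : ℕ → Symb) : Prop :=
  ∀ n : ℕ, ple (fun i => A (n + i)) A

/-- `A` is admissible: either an infinite sequence over `{L,R}`, or a finite word over
`{L,R}` followed by `C` (here: padded by `C`'s forever). -/
def admissible (A : ℕ → Symb) : Prop :=
  (∀ i, A i ≠ Symb.C) ∨
  ∃ n : ℕ, (∀ i < n, A i ≠ Symb.C) ∧ ∀ i, n ≤ i → A i = Symb.C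

/-- `B = A⁻`: if `A` is infinite (no `C`) then `B = A`; if `A = A_0⋯A_{n-1}C` then
`B = (A_0⋯A_{n-1}X)^∞` where `X = L` if the word `A_0⋯A_{n-1}` has an even number of `R`'s
and `X = R` otherwise. -/
def IsMminus (A B : ℕ → Symb) : Prop :=
  ((∀ i, A i ≠ Symb.C) ∧ B = A) ∨
  ∃ n : ℕ, (∀ i < n, A i ≠ Symb.C) ∧ A n = Symb.C ∧
    ∀ i : ℕ, B i = if i % (n + 1) < n then A (i % (n + 1))
      else if Even (countR A n) then Symb.L else Symb.R

lemma countR_succ (A : ℕ → Symb) (n : ℕ) :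
    countR A (n+1) = countR A n + (if A n = Symb.R then 1 else 0) := by
  unfold countR
  rw [Finset.range_add_one, Finset.filter_insert]
  split
  · rw [Finset.card_insert_of_notMem (by simp)]
  · simp

lemma countR_congr {A B : ℕ → Symb} {n : ℕ} (h : ∀ i < n, A i = B i) :
    countR A n = countR B n := by
  unfold countR
  congr 1
  apply Finset.filter_congr
  intro i hi
  rw [h i (Finset.mem_range.mp hi)]

lemma countR_add (A : ℕ → Symb) (a b : ℕ) :
    countR A (a + b) = countR A a + countR (fun i => A (a + i)) b := by
  induction b with
  | zero => simp [countR]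
  | succ b ih =>
      rw [show a + (b+1) = (a+b) + 1 from rfl, countR_succ, ih, countR_succ]
      omega

lemma periodic_iterate {Y : ℕ → Symb} {p : ℕ} (hper : ∀ i, Y (i + p) = Y i) :
    ∀ j i, Y (j * p + i) = Y i := by
  intro j
  induction j with
  | zero => simp
  | succ j ih =>
      intro i
      have h : (j+1) * p + i = (j * p + i) + p := by ring
      rw [h, hper, ih]

lemma countR_mul {Y : ℕ → Symb} {p : ℕ} (hper : ∀ i, Y (i + p) = Y i) (j : ℕ) :
    countR Y (j * p) = j * countR Y p := by
  induction j with
  | zero => simp [countR]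
  | succ j ih =>
      have h : (j+1) * p = j * p + p := by ring
      rw [h, countR_add, ih]
      have : countR (fun i => Y (j * p + i)) p = countR Y p :=
        countR_congr (fun i _ => periodic_iterate hper j i)
      rw [this]; ring

lemma countR_block {Y : ℕ → Symb} {p : ℕ} (hper : ∀ i, Y (i + p) = Y i) (j b : ℕ) :
    countR Y (j * p + b) = j * countR Y p + countR Y b := by
  rw [countR_add, countR_mul hper]
  have : countR (fun i => Y (j * p + i)) b = countR Y b :=
    countR_congr (fun i _ => periodic_iterate hper j i)
  rw [this]

lemma ple_strict_ne {A B : ℕ → Symb} {k : ℕ}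
    (h : (Even (countR A k) ∧ (A k).toNat < (B k).toNat) ∨
      (¬ Even (countR A k) ∧ (B k).toNat < (A k).toNat)) :
    A k ≠ B k := by
  intro he
  rcases h with ⟨_, h⟩ | ⟨_, h⟩ <;> rw [he] at h <;> exact Nat.lt_irrefl _ h

lemma eq_L_of_lt_C {a : Symb} (h : a.toNat < Symb.C.toNat) : a = Symb.L := by
  cases a
  · rfl
  · exact absurd h (by decide)
  · exact absurd h (by decide)

lemma eq_R_of_C_lt {a : Symb} (h : Symb.C.toNat < a.toNat) : a = Symb.R := by
  cases a
  · exact absurd h (by decide)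
  · exact absurd h (by decide)
  · rfl

lemma key_lemma (X Y : ℕ → Symb) (p : ℕ) (hp : 0 < p)
    (hper : ∀ i, Y (i + p) = Y i) (heven : Even (countR Y p))
    (hagree : ∀ i < p, X i = Y i) (hmax : maximal X) : ple X Y := by
  by_cases hXY : X = Y
  · exact Or.inl hXY
  have hex : ∃ m, X m ≠ Y m := by
    by_contra h
    push_neg at h
    exact hXY (funext h)
  set m := Nat.find hex with hm
  have hne : X m ≠ Y m := Nat.find_spec hex
  have hlt : ∀ i < m, X i = Y i := fun i hi => not_not.mp (Nat.find_min hex hi)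
  have hpm : p ≤ m := by
    by_contra h
    push_neg at h
    exact hne (hagree m h)
  set j := m / p with hjdef
  set r := m % p with hrdef
  have hr : r < p := Nat.mod_lt _ hp
  have hmjr : j * p + r = m := by rw [hjdef, hrdef, Nat.mul_comm]; exact Nat.div_add_mod m p
  have hj : 1 ≤ j := by
    rw [hjdef]
    exact (Nat.one_le_div_iff hp).mpr hpm
  have hrm : r < m := lt_of_lt_of_le hr hpm
  have hXr : X r = Y r := hagree r hr
  have hYm : Y m = Y r := by rw [← hmjr]; exact periodic_iterate hper j r
  -- the shifted sequence agrees with X below r and differs at r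
  have hshift_eq : ∀ i < r, X (j * p + i) = X i := by
    intro i hi
    have h1 : j * p + i < m := by omega
    rw [hlt _ h1, periodic_iterate hper j i, ← hagree i (lt_trans hi hr)]
  have hshift_ne : X (j * p + r) ≠ X r := by
    rw [hmjr, hXr, ← hYm]
    exact hne
  rcases hmax (j * p) with heq | ⟨t, hta, hts⟩
  · exact absurd (congrFun heq r) hshift_ne
  · have htr : t = r := by
      rcases lt_trichotomy t r with h | h | h
      · exact absurd (hshift_eq t h) (ple_strict_ne hts)
      · exact h
      · exact absurd (hta r h) hshift_ne
    subst htr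
    -- parity bookkeeping
    have hc1 : countR (fun i => X (j * p + i)) r = countR Y r := by
      apply countR_congr
      intro i hi
      have h1 : j * p + i < m := by omega
      rw [hlt _ h1, periodic_iterate hper j i]
    have hc2 : countR X m = j * countR Y p + countR Y r := by
      rw [countR_congr hlt, ← hmjr, countR_block hper]
    have hpar : Even (countR X m) ↔ Even (countR (fun i => X (j * p + i)) r) := by
      rw [hc1, hc2, Nat.even_add]
      have : Even (j * countR Y p) := heven.mul_left j
      tauto
    refine Or.inr ⟨m, hlt, ?_⟩
    have hXm : X (j * p + r) = X m := by rw [hmjr]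
    have hXt : X r = Y m := by rw [hXr, hYm]
    rcases hts with ⟨he, hl⟩ | ⟨ho, hl⟩
    · left
      have hl' : (X (j * p + r)).toNat < (X r).toNat := hl
      rw [hXm, hXt] at hl'
      exact ⟨hpar.mpr he, hl'⟩
    · right
      have hl' : (X r).toNat < (X (j * p + r)).toNat := hl
      rw [hXm, hXt] at hl'
      exact ⟨fun h => ho (hpar.mp h), hl'⟩

lemma minus_spec (M B : ℕ → Symb) (n : ℕ)
    (hB : ∀ i, B i = if i % (n+1) < n then M (i % (n+1))
      else if Even (countR M n) then Symb.L else Symb.R) :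
    (∀ i < n, B i = M i) ∧
    (B n = if Even (countR M n) then Symb.L else Symb.R) ∧
    (∀ i, B (i + (n+1)) = B i) ∧
    Even (countR B (n+1)) := by
  have hag : ∀ i < n, B i = M i := by
    intro i hi
    rw [hB i, Nat.mod_eq_of_lt (by omega), if_pos hi]
  have hBn : B n = if Even (countR M n) then Symb.L else Symb.R := by
    rw [hB n, Nat.mod_eq_of_lt (by omega), if_neg (lt_irrefl n)]
  have hper : ∀ i, B (i + (n+1)) = B i := by
    intro i
    rw [hB (i + (n+1)), hB i, Nat.add_mod_right]
  refine ⟨hag, hBn, hper, ?_⟩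
  have hcnt : countR B n = countR M n := countR_congr hag
  rw [countR_succ, hcnt]
  by_cases he : Even (countR M n)
  · rw [if_pos he] at hBn
    rw [hBn]
    simpa using he
  · rw [if_neg he] at hBn
    rw [hBn, if_pos rfl]
    rw [Nat.even_add_one]
    simpa using he

/-- If `M, M̃, M⁻, M̃⁻` are maximal admissible sequences and `M ⪯ M̃`, then `M⁻ ⪯ M̃⁻`. -/
theorem stmt6 (M M' Mm Mm' : ℕ → Symb)
    (hadm : admissible M) (hadm' : admissible M')
    (hMm : IsMminus M Mm) (hMm' : IsMminus M' Mm')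
    (hmax : maximal M) (hmax' : maximal M')
    (hmaxm : maximal Mm) (hmaxm' : maximal Mm')
    (hle : ple M M') : ple Mm Mm' := by
  rcases hMm with ⟨hMC, rfl⟩ | ⟨n, hC, hn, hB⟩
  · -- M is infinite, Mm = M
    rcases hMm' with ⟨hMC', rfl⟩ | ⟨n', hC', hn', hB'⟩
    · exact hle
    · -- M' finite with C at n'
      obtain ⟨ag', hBn', hper', heven'⟩ := minus_spec M' Mm' n' hB'
      rcases hle with heq | ⟨k, hk, hks⟩
      · exact absurd (by rw [heq]; exact hn') (hMC n')
      · have hkn' : k ≤ n' := by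
          by_contra h
          push_neg at h
          exact hMC n' (by rw [hk n' h]; exact hn')
        rcases lt_or_eq_of_le hkn' with hlt' | rfl
        · refine Or.inr ⟨k, ?_, ?_⟩
          · intro i hi
            rw [hk i hi, ← ag' i (lt_trans hi hlt')]
          · rw [ag' k hlt']
            exact hks
        · -- k = n'
          rcases hks with ⟨he, hl⟩ | ⟨ho, hl⟩
          · rw [hn'] at hl
            have hMk : Mm k = Symb.L := eq_L_of_lt_C hl
            have he' : Even (countR M' k) := by rw [← countR_congr hk]; exact he
            rw [if_pos he'] at hBn'
            apply key_lemma Mm Mm' (k+1) (by omega) hper' heven' _ hmaxm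
            intro i hi
            rcases Nat.lt_succ_iff_lt_or_eq.mp hi with hi' | rfl
            · rw [hk i hi', ← ag' i hi']
            · rw [hMk, hBn']
          · rw [hn'] at hl
            have hMk : Mm k = Symb.R := eq_R_of_C_lt hl
            have he' : ¬ Even (countR M' k) := by rw [← countR_congr hk]; exact ho
            rw [if_neg he'] at hBn'
            apply key_lemma Mm Mm' (k+1) (by omega) hper' heven' _ hmaxm
            intro i hi
            rcases Nat.lt_succ_iff_lt_or_eq.mp hi with hi' | rfl
            · rw [hk i hi', ← ag' i hi']
            · rw [hMk, hBn']
  · -- M finite with C at n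
    obtain ⟨ag, hBn, hper, heven⟩ := minus_spec M Mm n hB
    have hcnt : ∀ k, k ≤ n → countR Mm k = countR M k := fun k hk =>
      countR_congr (fun i hi => ag i (lt_of_lt_of_le hi hk))
    rcases hMm' with ⟨hMC', rfl⟩ | ⟨n', hC', hn', hB'⟩
    · -- M' infinite, Mm' = M'
      rcases hle with heq | ⟨k, hk, hks⟩
      · exact absurd (by rw [← heq]; exact hn) (hMC' n)
      · have hkn : k ≤ n := by
          by_contra h
          push_neg at h
          exact hMC' n (by rw [← hk n h]; exact hn)
        rcases lt_or_eq_of_le hkn with hlt' | rfl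
        · refine Or.inr ⟨k, ?_, ?_⟩
          · intro i hi
            rw [ag i (lt_trans hi hlt'), hk i hi]
          · rw [ag k hlt', hcnt k (le_of_lt hlt')]
            exact hks
        · -- k = n
          refine Or.inr ⟨k, ?_, ?_⟩
          · intro i hi
            rw [ag i hi, hk i hi]
          · rcases hks with ⟨he, hl⟩ | ⟨ho, hl⟩
            · rw [hn] at hl
              have hMk : Mm' k = Symb.R := eq_R_of_C_lt hl
              rw [if_pos he] at hBn
              left
              refine ⟨by rw [hcnt k le_rfl]; exact he, ?_⟩
              rw [hBn, hMk]
              decide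
            · rw [hn] at hl
              have hMk : Mm' k = Symb.L := eq_L_of_lt_C hl
              rw [if_neg ho] at hBn
              right
              refine ⟨by rw [hcnt k le_rfl]; exact ho, ?_⟩
              rw [hBn, hMk]
              decide
    · -- both finite
      obtain ⟨ag', hBn', hper', heven'⟩ := minus_spec M' Mm' n' hB'
      have hCall : ∀ i, n ≤ i → M i = Symb.C := by
        rcases hadm with h | ⟨n0, h0, h1⟩
        · exact absurd hn (h n)
        · have hn0 : n0 = n := by
            rcases lt_trichotomy n0 n with h' | h' | h'
            · exact absurd (h1 n0 le_rfl) (hC n0 h')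
            · exact h'
            · exact absurd hn (h0 n h')
          rw [hn0] at h1
          exact h1
      have hC'all : ∀ i, n' ≤ i → M' i = Symb.C := by
        rcases hadm' with h | ⟨n0, h0, h1⟩
        · exact absurd hn' (h n')
        · have hn0 : n0 = n' := by
            rcases lt_trichotomy n0 n' with h' | h' | h'
            · exact absurd (h1 n0 le_rfl) (hC' n0 h')
            · exact h'
            · exact absurd hn' (h0 n' h')
          rw [hn0] at h1
          exact h1
      rcases hle with heq | ⟨k, hk, hks⟩
      · -- M = M' : then n = n' and Mm = Mm'
        subst heq
        have hnn : n = n' := by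
          rcases lt_trichotomy n n' with h' | h' | h'
          · exact absurd hn (hC' n h')
          · exact h'
          · exact absurd hn' (hC n' h')
        subst hnn
        exact Or.inl (funext fun i => (hB i).trans (hB' i).symm)
      · have hnek : M k ≠ M' k := ple_strict_ne hks
        have hkn : k ≤ n := by
          by_contra h
          push_neg at h
          have h1 : M' n = Symb.C := by rw [← hk n h]; exact hn
          have h2 : n' ≤ n := by
            by_contra h2
            push_neg at h2
            exact hC' n h2 h1
          exact hnek ((hCall k (le_of_lt h)).trans (hC'all k (by omega)).symm)
        have hkn' : k ≤ n' := by
          by_contra h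
          push_neg at h
          have h1 : M n' = Symb.C := by rw [hk n' h]; exact hn'
          have h2 : n ≤ n' := by
            by_contra h2
            push_neg at h2
            exact hC n' h2 h1
          exact hnek ((hCall k (by omega)).trans (hC'all k (le_of_lt h)).symm)
        by_cases hck : k < n ∧ k < n'
        · obtain ⟨h1, h2⟩ := hck
          refine Or.inr ⟨k, ?_, ?_⟩
          · intro i hi
            rw [ag i (lt_trans hi h1), hk i hi, ← ag' i (lt_trans hi h2)]
          · rw [ag k h1, ag' k h2, hcnt k (le_of_lt h1)]
            exact hks
        · push_neg at hck
          rcases lt_or_eq_of_le hkn with h1 | rfl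
          · -- k < n, hence k = n', and n' < n
            have h2 : k = n' := le_antisymm hkn' (hck h1)
            subst h2
            -- k = n' < n : use key lemma
            rcases hks with ⟨he, hl⟩ | ⟨ho, hl⟩
            · rw [hn'] at hl
              have hMk : M k = Symb.L := eq_L_of_lt_C hl
              have he' : Even (countR M' k) := by rw [← countR_congr hk]; exact he
              rw [if_pos he'] at hBn'
              apply key_lemma Mm Mm' (k+1) (by omega) hper' heven' _ hmaxm
              intro i hi
              rcases Nat.lt_succ_iff_lt_or_eq.mp hi with hi' | rfl
              · rw [ag i (lt_trans hi' h1), hk i hi', ← ag' i hi']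
              · rw [ag i h1, hMk, hBn']
            · rw [hn'] at hl
              have hMk : M k = Symb.R := eq_R_of_C_lt hl
              have he' : ¬ Even (countR M' k) := by rw [← countR_congr hk]; exact ho
              rw [if_neg he'] at hBn'
              apply key_lemma Mm Mm' (k+1) (by omega) hper' heven' _ hmaxm
              intro i hi
              rcases Nat.lt_succ_iff_lt_or_eq.mp hi with hi' | rfl
              · rw [ag i (lt_trans hi' h1), hk i hi', ← ag' i hi']
              · rw [ag i h1, hMk, hBn']
          · -- k = n
            have h2 : k < n' := by
              rcases lt_or_eq_of_le hkn' with h | h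
              · exact h
              · exfalso
                apply hnek
                rw [hn, h, hn']
            refine Or.inr ⟨k, ?_, ?_⟩
            · intro i hi
              rw [ag i hi, hk i hi, ← ag' i (lt_trans hi h2)]
            · rcases hks with ⟨he, hl⟩ | ⟨ho, hl⟩
              · rw [hn] at hl
                have hMk : M' k = Symb.R := eq_R_of_C_lt hl
                rw [if_pos he] at hBn
                left
                refine ⟨by rw [hcnt k le_rfl]; exact he, ?_⟩
                rw [hBn, ag' k h2, hMk]
                decide
              · rw [hn] at hl
                have hMk : M' k = Symb.L := eq_L_of_lt_C hl
                rw [if_neg ho] at hBn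
                right
                refine ⟨by rw [hcnt k le_rfl]; exact ho, ?_⟩
                rw [hBn, ag' k h2, hMk]
                decide
end

section
/- Fix β ∈ (1/2, 1) and let (m̄_k)_{k≥1} be a nondecreasing sequence of integers with m̄_1 ≥ 1 and m̄_{k+1} ≤ m̄_k + m̄_1 for all k. Then the series defining Θ(α,β) converges uniformly for α ∈ [1/2, β] and lim_{α→β⁻} Θ(α,β) = 0. -/
open Filter Topology

/-!
On `[a, β]` with `0 ≤ a` and `1 - a < β ≤ 1` the `k`-th term of the series is dominated by
`((1 - a) / β) ^ (k + 1)`, since `|α - 1| ≤ 1 - a` and `0 ≤ α / β ≤ 1`; the Weierstrass M-test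
gives uniform convergence, hence continuity of `Θ(·, β)` on `[a, β]`. At `α = β` the factor
`(α / β) ^ m̄_k` is `1` and the remaining geometric series sums to `β - 1`, so `Θ(β, β) = 0`.
-/

namespace Theta

variable (m : ℕ → ℕ) (β : ℝ)

noncomputable def term (k : ℕ) (α : ℝ) : ℝ :=
  ((α - 1) / β) ^ (k + 1) * (α / β) ^ (m (k + 1))

variable {m β}

theorem abs_term_le {a α : ℝ} (ha : 0 ≤ a) (hβ0 : 0 < β) (hβ1 : β ≤ 1)
    (hα : α ∈ Set.Icc a β) (k : ℕ) : |term m β k α| ≤ ((1 - a) / β) ^ (k + 1) := by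
  obtain ⟨haα, hαβ⟩ := hα
  have h_first : |(α - 1) / β| ≤ (1 - a) / β := by
    rw [abs_div, abs_of_pos hβ0, abs_of_nonpos (by linarith)]
    gcongr
    linarith
  have h_second : |α / β| ≤ 1 := by
    rw [abs_div, abs_of_pos hβ0, abs_of_nonneg (by linarith), div_le_one hβ0]
    exact hαβ
  have h_ratio_nonneg : 0 ≤ (1 - a) / β := (abs_nonneg _).trans h_first
  calc |term m β k α| = |(α - 1) / β| ^ (k + 1) * |α / β| ^ (m (k + 1)) := by
        rw [term, abs_mul, abs_pow, abs_pow]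
    _ ≤ ((1 - a) / β) ^ (k + 1) * 1 ^ (m (k + 1)) := by gcongr
    _ = ((1 - a) / β) ^ (k + 1) := by rw [one_pow, mul_one]

theorem tendstoUniformlyOn_theta {a : ℝ} (ha : 0 ≤ a) (ha1 : a ≤ 1) (haβ : 1 - a < β)
    (hβ1 : β ≤ 1) :
    TendstoUniformlyOn (fun (N : ℕ) α => 1 - β + ∑ k ∈ Finset.range N, term m β k α)
      (fun α => theta m α β) atTop (Set.Icc a β) := by
  have hβ0 : 0 < β := by linarith
  have hr0 : 0 ≤ (1 - a) / β := div_nonneg (by linarith) hβ0.le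
  have hr1 : (1 - a) / β < 1 := (div_lt_one hβ0).mpr haβ
  have h_majorant : Summable fun k : ℕ => ((1 - a) / β) ^ (k + 1) :=
    (summable_nat_add_iff 1).mpr (summable_geometric_of_lt_one hr0 hr1)
  have h_series := tendstoUniformlyOn_tsum_nat (f := term m β) h_majorant
    (fun k α hα => (Real.norm_eq_abs _).trans_le (abs_term_le ha hβ0 hβ1 hα k))
  exact (tendsto_const_nhds.tendstoUniformlyOn_const _).add h_series

theorem continuousOn_theta {a : ℝ} (ha : 0 ≤ a) (ha1 : a ≤ 1) (haβ : 1 - a < β) (hβ1 : β ≤ 1) :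
    ContinuousOn (fun α => theta m α β) (Set.Icc a β) :=
  (tendstoUniformlyOn_theta ha ha1 haβ hβ1).continuousOn <| Frequently.of_forall fun _ =>
    Continuous.continuousOn <| by unfold term; fun_prop

theorem theta_self (hβ : 1 / 2 < β) : theta m β β = 0 := by
  have hβ0 : 0 < β := by linarith
  have hr : ‖(β - 1) / β‖ < 1 := by
    rw [Real.norm_eq_abs, abs_div, abs_of_pos hβ0, div_lt_one hβ0, abs_lt]
    constructor <;> linarith
  have h_geom : ∑' k : ℕ, ((β - 1) / β) ^ (k + 1) = β - 1 := by
    simp_rw [pow_succ']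
    rw [tsum_mul_left, tsum_geometric_of_norm_lt_one hr]
    field_simp
    ring
  simp only [theta, div_self hβ0.ne', one_pow, mul_one, h_geom]
  ring

end Theta

open Theta in
theorem stmt8_general (β : ℝ) (hβ : β ∈ Set.Ioo (1 / 2 : ℝ) 1)
    (m : ℕ → ℕ) :
    TendstoUniformlyOn
      (fun (N : ℕ) (α : ℝ) =>
        1 - β + ∑ k ∈ Finset.range N, ((α - 1) / β) ^ (k + 1) * (α / β) ^ (m (k + 1)))
      (fun α => theta m α β) atTop (Set.Icc (1 / 2 : ℝ) β) ∧
    Tendsto (fun α => theta m α β) (𝓝[<] β) (𝓝 0) := by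
  obtain ⟨hβ_gt, hβ_lt⟩ := hβ
  have ha : (0 : ℝ) ≤ 1 / 2 := by norm_num
  have ha1 : (1 / 2 : ℝ) ≤ 1 := by norm_num
  have haβ : 1 - 1 / 2 < β := by linarith
  refine ⟨tendstoUniformlyOn_theta ha ha1 haβ hβ_lt.le, ?_⟩
  have h_cont := continuousOn_theta (m := m) ha ha1 haβ hβ_lt.le β ⟨hβ_gt.le, le_rfl⟩
  rw [ContinuousWithinAt, theta_self hβ_gt] at h_cont
  exact h_cont.mono_left <| nhdsWithin_le_of_mem <|
    mem_of_superset (Ioo_mem_nhdsLT hβ_gt) Set.Ioo_subset_Icc_self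

/-- For fixed `β ∈ (1/2,1)` and a nondecreasing sequence `m̄` with `m̄_1 ≥ 1` and
`m̄_{k+1} ≤ m̄_k + m̄_1`, the series defining `Θ(·,β)` converges uniformly on `[1/2, β]`
and `Θ(α,β) → 0` as `α → β⁻`. -/
theorem stmt8 (β : ℝ) (hβ : β ∈ Set.Ioo (1 / 2 : ℝ) 1)
    (m : ℕ → ℕ) (hm0 : m 0 = 0) (hm1 : 1 ≤ m 1) (hmono : Monotone m)
    (hsub : ∀ k : ℕ, m (k + 1) ≤ m k + m 1) :
    TendstoUniformlyOn
      (fun (N : ℕ) (α : ℝ) =>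
        1 - β + ∑ k ∈ Finset.range N, ((α - 1) / β) ^ (k + 1) * (α / β) ^ (m (k + 1)))
      (fun α => theta m α β) atTop (Set.Icc (1 / 2 : ℝ) β) ∧
    Tendsto (fun α => theta m α β) (𝓝[<] β) (𝓝 0) :=
  stmt8_general β hβ m
end

section
/- Let (m̄_k)_{k≥1} be a nondecreasing sequence of integers with m̄_1 ≥ 1 and m̄_k ≤ k·m̄_1 for all k. Then Θ is infinitely differentiable on the open region {(α,β) : 1/2 < β < 1, 1−β < α < β}, and for every β₀ ∈ (1/2,1) there is an open neighborhood of the diagonal point (β₀,β₀) in ℝ² on which Θ is infinitely differentiable; on these sets all partial derivatives of Θ of every order are obtained by termwise differentiation of the defining series, and in particular ∂_α Θ(α,β) = Σ_{k=1}^∞ [ (k/β)((α−1)/β)^{k−1}(α/β)^{m̄_k} + (m̄_k/β)((α−1)/β)^k(α/β)^{m̄_k−1} ] and ∂_β Θ(α,β) = −1 + Σ_{k=1}^∞ (−(k+m̄_k)/β)((α−1)/β)^k(α/β)^{m̄_k}. -/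
/-- The termwise-differentiated series formula for `∂_α Θ` at `p = (α,β)`. -/
def derivAlphaEq (m : ℕ → ℕ) (p : ℝ × ℝ) : Prop :=
  deriv (fun a => theta m a p.2) p.1 =
    ∑' k : ℕ, (((k : ℝ) + 1) / p.2 * ((p.1 - 1) / p.2) ^ k * (p.1 / p.2) ^ (m (k + 1))
      + (m (k + 1) : ℝ) / p.2 * ((p.1 - 1) / p.2) ^ (k + 1)
        * (p.1 / p.2) ^ (m (k + 1) - 1))

/-- The termwise-differentiated series formula for `∂_β Θ` at `p = (α,β)`. -/
def derivBetaEq (m : ℕ → ℕ) (p : ℝ × ℝ) : Prop :=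
  deriv (fun b => theta m p.1 b) p.2 =
    -1 + ∑' k : ℕ, (-(((k : ℝ) + 1) + (m (k + 1) : ℝ)) / p.2)
      * ((p.1 - 1) / p.2) ^ (k + 1) * (p.1 / p.2) ^ (m (k + 1))

/-!
Write `x = (α - 1)/β`, `y = α/β`, so that `Θ(α, β) = 1 - β + F(x, y)` with
`F(x, y) = ∑ x^(k+1) y^(m̄_(k+1))`. Because `m̄_k ≤ k m̄_1`, on a box `|x| < r`, `|y| < t` with
`1 ≤ t` and `r t^m̄_1 < 1` the `k`-th term is at most `(r t^m̄_1)^(k+1)`. A partial derivative of a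
monomial series is again one, with coefficients multiplied by exponents that grow linearly in `k`;
so every derivative series is dominated by a polynomial times a geometric series and converges
uniformly on the box. Hence `F` is smooth wherever `|x| max(1, |y|)^m̄_1 < 1`, an open condition
that holds on the region `1 - β < α < β` (there `|x|, |y| < 1`) and at the diagonal points
(`y = 1`, `|x| = (1 - β₀)/β₀ < 1`). The derivative formulas are the chain rule applied termwise.
-/

open Set Filter Topology

noncomputable def monomialSeries (c : ℕ → ℝ) (i j : ℕ → ℕ) (q : ℝ × ℝ) : ℝ :=
  ∑' k, c k * q.1 ^ i k * q.2 ^ j k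

/-- The truncated exponent `i k - 1` is harmless: its coefficient `c k * i k` vanishes when
`i k = 0`. -/
noncomputable def monomialSeriesFDeriv (c : ℕ → ℝ) (i j : ℕ → ℕ) (q : ℝ × ℝ) :
    ℝ × ℝ →L[ℝ] ℝ :=
  monomialSeries (fun k => c k * i k) (fun k => i k - 1) j q • ContinuousLinearMap.fst ℝ ℝ ℝ +
    monomialSeries (fun k => c k * j k) i (fun k => j k - 1) q • ContinuousLinearMap.snd ℝ ℝ ℝ

theorem natCast_mul_pow_sub_one_mul {R : Type*} [CommSemiring R] (n : ℕ) (a : R) :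
    (n : R) * a ^ (n - 1) * a = n * a ^ n := by
  cases n with
  | zero => simp
  | succ n => rw [Nat.add_sub_cancel, mul_assoc, ← pow_succ]

theorem abs_mul_natCast_mul_pow_sub_one_le {r : ℝ} (hr : 0 < r) (a : ℝ) {n L : ℕ}
    (hn : n ≤ L) : |a * n| * r ^ (n - 1) ≤ L / r * (|a| * r ^ n) :=
  calc |a * n| * r ^ (n - 1) = |a| * (n * r ^ (n - 1) * r) / r := by
        rw [abs_mul, Nat.abs_cast]
        field_simp
    _ = n / r * (|a| * r ^ n) := by
        rw [natCast_mul_pow_sub_one_mul]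
        ring
    _ ≤ L / r * (|a| * r ^ n) := by gcongr

theorem abs_monomial_le (a : ℝ) (i j : ℕ) {x y r t : ℝ} (hx : |x| ≤ r) (hy : |y| ≤ t) :
    |a * x ^ i * y ^ j| ≤ |a| * r ^ i * t ^ j := by
  have := (abs_nonneg x).trans hx
  rw [abs_mul, abs_mul, abs_pow, abs_pow]
  gcongr

theorem abs_le_of_mem_Ioo_prod {r t : ℝ} {q : ℝ × ℝ} (hq : q ∈ Ioo (-r) r ×ˢ Ioo (-t) t) :
    |q.1| ≤ r ∧ |q.2| ≤ t :=
  ⟨abs_le.2 ⟨hq.1.1.le, hq.1.2.le⟩, abs_le.2 ⟨hq.2.1.le, hq.2.2.le⟩⟩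

theorem summable_succ_pow_mul_geometric (d : ℕ) {w : ℝ} (hw0 : 0 ≤ w) (hw1 : w < 1) :
    Summable fun k : ℕ => ((k : ℝ) + 1) ^ d * w ^ (k + 1) := by
  have := summable_pow_mul_geometric_of_norm_lt_one d (by rwa [Real.norm_of_nonneg hw0])
  exact_mod_cast (summable_nat_add_iff 1).2 this

theorem hasFDerivAt_monomial (a : ℝ) (i j : ℕ) (q : ℝ × ℝ) :
    HasFDerivAt (fun q : ℝ × ℝ => a * q.1 ^ i * q.2 ^ j)
      ((a * i * q.1 ^ (i - 1) * q.2 ^ j) • ContinuousLinearMap.fst ℝ ℝ ℝ +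
        (a * j * q.1 ^ i * q.2 ^ (j - 1)) • ContinuousLinearMap.snd ℝ ℝ ℝ) q := by
  refine ((((hasFDerivAt_fst (𝕜 := ℝ) (E := ℝ) (F := ℝ)).pow i).const_mul a).fun_mul
    ((hasFDerivAt_snd (𝕜 := ℝ) (E := ℝ) (F := ℝ)).pow j)).congr_fderiv ?_
  ext <;> simp <;> ring

theorem norm_smul_fst_add_smul_snd_le (A B : ℝ) :
    ‖A • ContinuousLinearMap.fst ℝ ℝ ℝ + B • ContinuousLinearMap.snd ℝ ℝ ℝ‖ ≤ |A| + |B| :=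
  calc _ ≤ ‖A‖ * ‖ContinuousLinearMap.fst ℝ ℝ ℝ‖ + ‖B‖ * ‖ContinuousLinearMap.snd ℝ ℝ ℝ‖ :=
        (norm_add_le _ _).trans (add_le_add (norm_smul_le _ _) (norm_smul_le _ _))
    _ ≤ ‖A‖ * 1 + ‖B‖ * 1 := by
        gcongr
        exacts [ContinuousLinearMap.norm_fst_le .., ContinuousLinearMap.norm_snd_le ..]
    _ = |A| + |B| := by simp

/-- Linear growth of the exponents keeps this class closed under partial differentiation. -/
structure IsMonomialMajorized (r t w : ℝ) (N : ℕ) (c : ℕ → ℝ) (i j : ℕ → ℕ) : Prop where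
  pos_fst : 0 < r
  pos_snd : 0 < t
  nonneg_ratio : 0 ≤ w
  ratio_lt_one : w < 1
  fst_le : ∀ k, i k ≤ N * (k + 1)
  snd_le : ∀ k, j k ≤ N * (k + 1)
  bound : ∃ C : ℝ, ∃ d : ℕ, ∀ k, |c k| * r ^ i k * t ^ j k ≤ C * ((k + 1) ^ d * w ^ (k + 1))

namespace IsMonomialMajorized

variable {r t w : ℝ} {N : ℕ} {c : ℕ → ℝ} {i j : ℕ → ℕ}

theorem partial_fst (h : IsMonomialMajorized r t w N c i j) :
    IsMonomialMajorized r t w N (fun k => c k * i k) (fun k => i k - 1) j := by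
  obtain ⟨C, d, hC⟩ := h.bound
  refine ⟨h.pos_fst, h.pos_snd, h.nonneg_ratio, h.ratio_lt_one,
    fun k => (Nat.sub_le _ _).trans (h.fst_le k), h.snd_le, N * C / r, d + 1, fun k => ?_⟩
  calc |c k * i k| * r ^ (i k - 1) * t ^ j k
      ≤ (N * (k + 1) : ℕ) / r * (|c k| * r ^ i k) * t ^ j k :=
        mul_le_mul_of_nonneg_right
          (abs_mul_natCast_mul_pow_sub_one_le h.pos_fst _ (h.fst_le k)) (pow_nonneg h.pos_snd.le _)
    _ = (N * (k + 1) : ℕ) / r * (|c k| * r ^ i k * t ^ j k) := by ring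
    _ ≤ (N * (k + 1) : ℕ) / r * (C * ((k + 1) ^ d * w ^ (k + 1))) :=
        mul_le_mul_of_nonneg_left (hC k) (div_nonneg (Nat.cast_nonneg _) h.pos_fst.le)
    _ = N * C / r * ((k + 1) ^ (d + 1) * w ^ (k + 1)) := by push_cast; ring

theorem partial_snd (h : IsMonomialMajorized r t w N c i j) :
    IsMonomialMajorized r t w N (fun k => c k * j k) i (fun k => j k - 1) := by
  obtain ⟨C, d, hC⟩ := h.bound
  refine ⟨h.pos_fst, h.pos_snd, h.nonneg_ratio, h.ratio_lt_one, h.fst_le,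
    fun k => (Nat.sub_le _ _).trans (h.snd_le k), N * C / t, d + 1, fun k => ?_⟩
  calc |c k * j k| * r ^ i k * t ^ (j k - 1)
      = |c k * j k| * t ^ (j k - 1) * r ^ i k := by ring
    _ ≤ (N * (k + 1) : ℕ) / t * (|c k| * t ^ j k) * r ^ i k :=
        mul_le_mul_of_nonneg_right
          (abs_mul_natCast_mul_pow_sub_one_le h.pos_snd _ (h.snd_le k)) (pow_nonneg h.pos_fst.le _)
    _ = (N * (k + 1) : ℕ) / t * (|c k| * r ^ i k * t ^ j k) := by ring
    _ ≤ (N * (k + 1) : ℕ) / t * (C * ((k + 1) ^ d * w ^ (k + 1))) :=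
        mul_le_mul_of_nonneg_left (hC k) (div_nonneg (Nat.cast_nonneg _) h.pos_snd.le)
    _ = N * C / t * ((k + 1) ^ (d + 1) * w ^ (k + 1)) := by push_cast; ring

theorem summable (h : IsMonomialMajorized r t w N c i j) {q : ℝ × ℝ} (hq₁ : |q.1| ≤ r)
    (hq₂ : |q.2| ≤ t) : Summable fun k => c k * q.1 ^ i k * q.2 ^ j k := by
  obtain ⟨C, d, hC⟩ := h.bound
  refine .of_norm_bounded
    ((summable_succ_pow_mul_geometric d h.nonneg_ratio h.ratio_lt_one).mul_left C) fun k => ?_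
  exact (abs_monomial_le _ _ _ hq₁ hq₂).trans (hC k)

theorem hasFDerivAt (h : IsMonomialMajorized r t w N c i j) {q : ℝ × ℝ}
    (hq : q ∈ Ioo (-r) r ×ˢ Ioo (-t) t) :
    HasFDerivAt (monomialSeries c i j) (monomialSeriesFDeriv c i j q) q := by
  obtain ⟨C₁, d₁, hC₁⟩ := h.partial_fst.bound
  obtain ⟨C₂, d₂, hC₂⟩ := h.partial_snd.bound
  have hu := ((summable_succ_pow_mul_geometric d₁ h.nonneg_ratio h.ratio_lt_one).mul_left C₁).add
    ((summable_succ_pow_mul_geometric d₂ h.nonneg_ratio h.ratio_lt_one).mul_left C₂)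
  obtain ⟨hq₁, hq₂⟩ := abs_le_of_mem_Ioo_prod hq
  have hderiv := hasFDerivAt_tsum_of_isPreconnected hu (isOpen_Ioo.prod isOpen_Ioo)
    ((convex_Ioo _ _).prod (convex_Ioo _ _)).isPreconnected
    (fun k z _ => hasFDerivAt_monomial (c k) (i k) (j k) z) (fun k z hz => ?_) hq
    (h.summable hq₁ hq₂) hq
  · have hs₁ := h.partial_fst.summable hq₁ hq₂
    have hs₂ := h.partial_snd.summable hq₁ hq₂
    rwa [Summable.tsum_add (hs₁.smul_const _) (hs₂.smul_const _), Summable.tsum_smul_const hs₁,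
      Summable.tsum_smul_const hs₂] at hderiv
  · obtain ⟨hz₁, hz₂⟩ := abs_le_of_mem_Ioo_prod hz
    exact (norm_smul_fst_add_smul_snd_le _ _).trans (add_le_add
      ((abs_monomial_le _ _ _ hz₁ hz₂).trans (hC₁ k)) ((abs_monomial_le _ _ _ hz₁ hz₂).trans (hC₂ k)))

theorem contDiffOn (h : IsMonomialMajorized r t w N c i j) (n : ℕ) :
    ContDiffOn ℝ n (monomialSeries c i j) (Ioo (-r) r ×ˢ Ioo (-t) t) := by
  induction n generalizing c i j with
  | zero => exact contDiffOn_zero.2 fun q hq => (h.hasFDerivAt hq).continuousAt.continuousWithinAt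
  | succ n ih =>
    rw [Nat.cast_succ, contDiffOn_succ_iff_hasFDerivWithinAt_of_uniqueDiffOn
      (isOpen_Ioo.prod isOpen_Ioo).uniqueDiffOn]
    refine ⟨by simp, monomialSeriesFDeriv c i j, ?_,
      fun q hq => (h.hasFDerivAt hq).hasFDerivWithinAt⟩
    exact ((ih h.partial_fst).smul contDiffOn_const).add ((ih h.partial_snd).smul contDiffOn_const)

end IsMonomialMajorized

noncomputable def thetaCoords (p : ℝ × ℝ) : ℝ × ℝ := ((p.1 - 1) / p.2, p.1 / p.2)

noncomputable def thetaSeries (m : ℕ → ℕ) : ℝ × ℝ → ℝ :=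
  monomialSeries (fun _ => 1) (fun k => k + 1) (fun k => m (k + 1))

def thetaDomain (M : ℕ) : Set (ℝ × ℝ) :=
  {p | 0 < p.2} ∩ thetaCoords ⁻¹' {q | |q.1| * max 1 |q.2| ^ M < 1}

theorem theta_eq_thetaSeries (m : ℕ → ℕ) (p : ℝ × ℝ) :
    theta m p.1 p.2 = 1 - p.2 + thetaSeries m (thetaCoords p) := by
  simp [theta, thetaSeries, monomialSeries, thetaCoords]

theorem contDiffAt_thetaCoords {n : WithTop ℕ∞} {p : ℝ × ℝ} (hp : p.2 ≠ 0) :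
    ContDiffAt ℝ n thetaCoords p :=
  ((contDiffAt_fst.sub contDiffAt_const).div contDiffAt_snd hp).prodMk
    (contDiffAt_fst.div contDiffAt_snd hp)

theorem isOpen_thetaDomain (M : ℕ) : IsOpen (thetaDomain M) :=
  ContinuousOn.isOpen_inter_preimage
    (fun _ hp => (contDiffAt_thetaCoords (n := 0) (ne_of_gt hp)).continuousAt.continuousWithinAt)
    (isOpen_lt continuous_const continuous_snd) (isOpen_lt (by fun_prop) continuous_const)

theorem setOf_subset_thetaDomain (M : ℕ) :
    {p : ℝ × ℝ | 1 - p.2 < p.1 ∧ p.1 < p.2} ⊆ thetaDomain M := by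
  rintro p ⟨hlow, hhigh⟩
  have hβ : 0 < p.2 := by linarith
  have hx : |(p.1 - 1) / p.2| < 1 := by
    rw [abs_div, abs_of_pos hβ, div_lt_one hβ, abs_lt]
    constructor <;> linarith
  have hy : |p.1 / p.2| ≤ 1 := by
    rw [abs_div, abs_of_pos hβ, div_le_one hβ, abs_le]
    constructor <;> linarith
  refine ⟨hβ, ?_⟩
  simpa [thetaCoords, max_eq_left hy] using hx

theorem diag_mem_thetaDomain {β₀ : ℝ} (h : 1 / 2 < β₀) (M : ℕ) : (β₀, β₀) ∈ thetaDomain M := by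
  have hβ : 0 < β₀ := by linarith
  refine ⟨hβ, ?_⟩
  simp only [thetaCoords, mem_preimage, mem_ofPred_eq, div_self hβ.ne', abs_one, max_self,
    one_pow, mul_one]
  rw [abs_div, abs_of_pos hβ, div_lt_one hβ, abs_lt]
  constructor <;> linarith

theorem exists_box_mul_pow_lt_one {x y : ℝ} {M : ℕ} (h : |x| * max 1 |y| ^ M < 1) :
    ∃ r t : ℝ, |x| < r ∧ |y| < t ∧ 1 ≤ t ∧ r * t ^ M < 1 := by
  have hcont : Continuous fun ε : ℝ => (|x| + ε) * (max 1 |y| + ε) ^ M := by fun_prop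
  have hev : ∀ᶠ ε in 𝓝[>] (0 : ℝ), (|x| + ε) * (max 1 |y| + ε) ^ M < 1 ∧ 0 < ε :=
    Eventually.and
      (nhdsWithin_le_nhds ((hcont.tendsto 0).eventually (gt_mem_nhds (by simpa using h))))
      self_mem_nhdsWithin
  obtain ⟨ε, hlt, hε⟩ := hev.exists
  exact ⟨_, _, by linarith, by linarith [le_max_right 1 |y|], by linarith [le_max_left 1 |y|], hlt⟩

section Theta

variable {m : ℕ → ℕ} {p : ℝ × ℝ}

theorem isMonomialMajorized_thetaSeries (hlin : ∀ k : ℕ, 1 ≤ k → m k ≤ k * m 1)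
    {r t : ℝ} (hr : 0 < r) (ht : 1 ≤ t) (hw : r * t ^ m 1 < 1) :
    IsMonomialMajorized r t (r * t ^ m 1) (m 1 + 1) (fun _ => 1) (fun k => k + 1)
      (fun k => m (k + 1)) := by
  have hm (k : ℕ) : m (k + 1) ≤ m 1 * (k + 1) := by
    rw [mul_comm]
    exact hlin (k + 1) k.succ_pos
  refine ⟨hr, by linarith, by positivity, hw, fun k => by nlinarith, fun k => by nlinarith [hm k],
    1, 0, fun k => ?_⟩
  calc |(1 : ℝ)| * r ^ (k + 1) * t ^ m (k + 1) ≤ r ^ (k + 1) * t ^ (m 1 * (k + 1)) := by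
        rw [abs_one, one_mul]
        exact mul_le_mul_of_nonneg_left (pow_le_pow_right₀ ht (hm k)) (by positivity)
    _ = 1 * (((k : ℝ) + 1) ^ 0 * (r * t ^ m 1) ^ (k + 1)) := by ring

theorem exists_isMonomialMajorized_thetaSeries (hlin : ∀ k : ℕ, 1 ≤ k → m k ≤ k * m 1)
    {q : ℝ × ℝ} (hq : |q.1| * max 1 |q.2| ^ m 1 < 1) :
    ∃ r t w : ℝ, ∃ N : ℕ, q ∈ Ioo (-r) r ×ˢ Ioo (-t) t ∧
      IsMonomialMajorized r t w N (fun _ => 1) (fun k => k + 1) (fun k => m (k + 1)) := by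
  obtain ⟨r, t, hr, ht, ht1, hw⟩ := exists_box_mul_pow_lt_one hq
  exact ⟨r, t, _, _, ⟨abs_lt.1 hr, abs_lt.1 ht⟩,
    isMonomialMajorized_thetaSeries hlin ((abs_nonneg _).trans_lt hr) ht1 hw⟩

theorem contDiffAt_theta (hlin : ∀ k : ℕ, 1 ≤ k → m k ≤ k * m 1) (hp : p ∈ thetaDomain (m 1)) :
    ContDiffAt ℝ (⊤ : ℕ∞) (fun p : ℝ × ℝ => theta m p.1 p.2) p := by
  obtain ⟨r, t, w, N, hq, h⟩ := exists_isMonomialMajorized_thetaSeries hlin hp.2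
  have hF : ContDiffAt ℝ (⊤ : ℕ∞) (thetaSeries m) (thetaCoords p) :=
    (contDiffOn_infty.2 h.contDiffOn).contDiffAt ((isOpen_Ioo.prod isOpen_Ioo).mem_nhds hq)
  simp_rw [theta_eq_thetaSeries]
  exact (contDiffAt_const.sub contDiffAt_snd).add (hF.comp p (contDiffAt_thetaCoords hp.1.ne'))

theorem derivAlphaEq_of_mem_thetaDomain (hlin : ∀ k : ℕ, 1 ≤ k → m k ≤ k * m 1)
    (hp : p ∈ thetaDomain (m 1)) : derivAlphaEq m p := by
  obtain ⟨r, t, w, N, hq, h⟩ := exists_isMonomialMajorized_thetaSeries hlin hp.2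
  obtain ⟨hq₁, hq₂⟩ := abs_le_of_mem_Ioo_prod hq
  have hcoords : HasDerivAt (fun a => thetaCoords (a, p.2)) (1 / p.2, 1 / p.2) p.1 :=
    (((hasDerivAt_id p.1).sub_const 1).div_const p.2).prodMk ((hasDerivAt_id p.1).div_const p.2)
  have hF := (h.hasFDerivAt hq).comp_hasDerivAt p.1 hcoords
  have hθ : (fun a => theta m a p.2) = fun a => 1 - p.2 + thetaSeries m (thetaCoords (a, p.2)) :=
    funext fun a => theta_eq_thetaSeries m (a, p.2)
  unfold derivAlphaEq
  rw [hθ, deriv_const_add]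
  refine hF.deriv.trans ?_
  simp only [monomialSeriesFDeriv, monomialSeries, add_apply, smul_apply,
    ContinuousLinearMap.coe_fst', ContinuousLinearMap.coe_snd', smul_eq_mul]
  rw [← tsum_mul_right, ← tsum_mul_right,
    ← ((h.partial_fst.summable hq₁ hq₂).mul_right _).tsum_add
      ((h.partial_snd.summable hq₁ hq₂).mul_right _)]
  refine tsum_congr fun k => ?_
  simp only [thetaCoords]
  push_cast
  ring

theorem derivBetaEq_of_mem_thetaDomain (hlin : ∀ k : ℕ, 1 ≤ k → m k ≤ k * m 1)
    (hp : p ∈ thetaDomain (m 1)) : derivBetaEq m p := by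
  obtain ⟨r, t, w, N, hq, h⟩ := exists_isMonomialMajorized_thetaSeries hlin hp.2
  obtain ⟨hq₁, hq₂⟩ := abs_le_of_mem_Ioo_prod hq
  have hβ : p.2 ≠ 0 := ne_of_gt hp.1
  have hcoords : HasDerivAt (fun b => thetaCoords (p.1, b))
      (-((p.1 - 1) / p.2) / p.2, -(p.1 / p.2) / p.2) p.2 := by
    unfold thetaCoords
    convert ((hasDerivAt_const p.2 (p.1 - 1)).fun_div (hasDerivAt_id' p.2) hβ).prodMk
      ((hasDerivAt_const p.2 p.1).fun_div (hasDerivAt_id' p.2) hβ) using 2 <;> field_simp <;> ring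
  have hF := (h.hasFDerivAt hq).comp_hasDerivAt p.2 hcoords
  have hθ : (fun b => theta m p.1 b) = fun b => 1 - b + thetaSeries m (thetaCoords (p.1, b)) :=
    funext fun b => theta_eq_thetaSeries m (p.1, b)
  unfold derivBetaEq
  rw [hθ]
  refine (((hasDerivAt_id' p.2).const_sub 1).add hF).deriv.trans ?_
  simp only [monomialSeriesFDeriv, monomialSeries, add_apply, smul_apply,
    ContinuousLinearMap.coe_fst', ContinuousLinearMap.coe_snd', smul_eq_mul]
  rw [← tsum_mul_right, ← tsum_mul_right,
    ← ((h.partial_fst.summable hq₁ hq₂).mul_right _).tsum_add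
      ((h.partial_snd.summable hq₁ hq₂).mul_right _)]
  congr 1
  refine tsum_congr fun k => ?_
  have hy := natCast_mul_pow_sub_one_mul (m (k + 1)) (p.1 / p.2)
  simp only [thetaCoords, Nat.add_sub_cancel]
  push_cast
  linear_combination (-((p.1 - 1) / p.2) ^ (k + 1) / p.2) * hy

end Theta

theorem stmt9_general (m : ℕ → ℕ)
    (hlin : ∀ k : ℕ, 1 ≤ k → m k ≤ k * m 1) :
    ContDiffOn ℝ (⊤ : ℕ∞) (fun p : ℝ × ℝ => theta m p.1 p.2)
      {p : ℝ × ℝ | 1 / 2 < p.2 ∧ p.2 < 1 ∧ 1 - p.2 < p.1 ∧ p.1 < p.2} ∧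
    (∀ p : ℝ × ℝ, (1 / 2 < p.2 ∧ p.2 < 1 ∧ 1 - p.2 < p.1 ∧ p.1 < p.2) →
      derivAlphaEq m p ∧ derivBetaEq m p) ∧
    (∀ β₀ ∈ Set.Ioo (1 / 2 : ℝ) 1, ∃ s : Set (ℝ × ℝ), IsOpen s ∧ (β₀, β₀) ∈ s ∧
      ContDiffOn ℝ (⊤ : ℕ∞) (fun p : ℝ × ℝ => theta m p.1 p.2) s ∧
      ∀ p ∈ s, derivAlphaEq m p ∧ derivBetaEq m p) := by
  have hsmooth : ContDiffOn ℝ (⊤ : ℕ∞) (fun p : ℝ × ℝ => theta m p.1 p.2) (thetaDomain (m 1)) :=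
    fun p hp => (contDiffAt_theta hlin hp).contDiffWithinAt
  have hderiv (p : ℝ × ℝ) (hp : p ∈ thetaDomain (m 1)) : derivAlphaEq m p ∧ derivBetaEq m p :=
    ⟨derivAlphaEq_of_mem_thetaDomain hlin hp, derivBetaEq_of_mem_thetaDomain hlin hp⟩
  have hregion : {p : ℝ × ℝ | 1 / 2 < p.2 ∧ p.2 < 1 ∧ 1 - p.2 < p.1 ∧ p.1 < p.2} ⊆
      thetaDomain (m 1) := fun p hp => setOf_subset_thetaDomain _ hp.2.2
  exact ⟨hsmooth.mono hregion, fun p hp => hderiv p (hregion hp), fun β₀ hβ₀ =>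
    ⟨thetaDomain (m 1), isOpen_thetaDomain _, diag_mem_thetaDomain hβ₀.1 _, hsmooth, hderiv⟩⟩

/-- `Θ` is infinitely differentiable on the open region
`{(α,β) : 1/2 < β < 1, 1-β < α < β}`, and also on a neighborhood of each diagonal point
`(β₀,β₀)` with `β₀ ∈ (1/2,1)`; on these sets the first partial derivatives are given by
termwise differentiation of the defining series. -/
theorem stmt9 (m : ℕ → ℕ) (hm0 : m 0 = 0) (hm1 : 1 ≤ m 1) (hmono : Monotone m)
    (hlin : ∀ k : ℕ, 1 ≤ k → m k ≤ k * m 1) :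
    ContDiffOn ℝ (⊤ : ℕ∞) (fun p : ℝ × ℝ => theta m p.1 p.2)
      {p : ℝ × ℝ | 1 / 2 < p.2 ∧ p.2 < 1 ∧ 1 - p.2 < p.1 ∧ p.1 < p.2} ∧
    (∀ p : ℝ × ℝ, (1 / 2 < p.2 ∧ p.2 < 1 ∧ 1 - p.2 < p.1 ∧ p.1 < p.2) →
      derivAlphaEq m p ∧ derivBetaEq m p) ∧
    (∀ β₀ ∈ Set.Ioo (1 / 2 : ℝ) 1, ∃ s : Set (ℝ × ℝ), IsOpen s ∧ (β₀, β₀) ∈ s ∧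
      ContDiffOn ℝ (⊤ : ℕ∞) (fun p : ℝ × ℝ => theta m p.1 p.2) s ∧
      ∀ p ∈ s, derivAlphaEq m p ∧ derivBetaEq m p) :=
  stmt9_general m hlin
end

section
/- Let β₀ ∈ (1/2, 1). Suppose 1/2 < β < 1, 1−β < α < β, and both |α/(1−β) − β₀/(1−β₀)| < 1/100 and |β/(1−α) − β₀/(1−β₀)| < 1/100 hold. Let m ≥ 1 be an integer such that (β/(1−α))·(1−β)·(β/α)^m ≥ α and (β/(1−α))·(1−β)·(β/α)^{m−1} < α. Then β₀/(1−β₀) − 2 < m < β₀/(1−β₀) + 1. -/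
/-!
Write `A = α / (1 - β)`, `B = β / (1 - α)` and `r = β / α`. The defining inequalities of `m`
say `m - 1 < log (A / B) / log r ≤ m`, and `r = ((A - 1) / A) / ((B - 1) / B)`. Cauchy's mean
value theorem for `log x` against `log (1 - 1 / x)`, whose derivatives have ratio `x - 1`,
gives `log (A / B) / log r = c - 1` for some `c` between `B` and `A`, and both `A` and `B` are
within `1 / 100` of `β₀ / (1 - β₀)`.
-/

open Real Set

theorem exists_log_div_eq_sub_one_mul_log {a b : ℝ} (hb : 1 < b) (hba : b < a) :
    ∃ c ∈ Ioo b a, log (a / b) = (c - 1) * log ((a - 1) * b / ((b - 1) * a)) := by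
  have hlog : ∀ x ∈ Icc b a, HasDerivAt log x⁻¹ x := fun x hx =>
    hasDerivAt_log (by linarith [hx.1])
  have hgap : ∀ x ∈ Icc b a,
      HasDerivAt (fun y => log (y - 1) - log y) ((x - 1)⁻¹ - x⁻¹) x := fun x hx =>
    (((hasDerivAt_id x).sub_const 1).log (by simp; linarith [hx.1])).sub
      (hasDerivAt_log (by linarith [hx.1])) |>.congr_deriv (by simp)
  obtain ⟨c, hc, hcauchy⟩ := exists_ratio_hasDerivAt_eq_ratio_slope log (·⁻¹) hba
    (fun x hx => (hlog x hx).continuousAt.continuousWithinAt)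
    (fun x hx => hlog x (Ioo_subset_Icc_self hx)) _ _
    (fun x hx => (hgap x hx).continuousAt.continuousWithinAt)
    (fun x hx => hgap x (Ioo_subset_Icc_self hx))
  refine ⟨c, hc, ?_⟩
  have hc1 : c - 1 ≠ 0 := by linarith [hc.1]
  have hc0 : c ≠ 0 := by linarith [hc.1]
  have ha0 : a ≠ 0 := by linarith
  have hb0 : b ≠ 0 := by linarith
  have ha1 : a - 1 ≠ 0 := by linarith
  have hb1 : b - 1 ≠ 0 := by linarith
  rw [log_div ha0 hb0, log_div (mul_ne_zero ha1 hb0) (mul_ne_zero hb1 ha0),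
    log_mul ha1 hb0, log_mul hb1 ha0]
  field_simp at hcauchy
  linear_combination -hcauchy

theorem sub_one_lt_and_le_of_pow_bracket {A B r t : ℝ} {m : ℕ} (hB : 0 < B) (hr : 1 < r)
    (hm : 1 ≤ m) (hlt : B * r ^ (m - 1) < A) (hle : A ≤ B * r ^ m)
    (ht : log (A / B) = t * log r) : (m : ℝ) - 1 < t ∧ t ≤ m := by
  have hL : 0 < log r := log_pos hr
  have hA : 0 < A := lt_of_le_of_lt (by positivity) hlt
  have hlog_lt := log_lt_log (by positivity) ((lt_div_iff₀' hB).mpr hlt)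
  have hlog_le := log_le_log (by positivity) ((div_le_iff₀' hB).mpr hle)
  rw [log_pow, ht, Nat.cast_sub hm, Nat.cast_one] at hlog_lt
  rw [log_pow, ht] at hlog_le
  exact ⟨lt_of_mul_lt_mul_right hlog_lt hL.le, le_of_mul_le_mul_right hlog_le hL⟩

theorem skewTent_slope_ratio {α β : ℝ} (hα : α ≠ 0) (hβ : β ≠ 0) (hα1 : 1 - α ≠ 0)
    (hβ1 : 1 - β ≠ 0) (hαβ : α + β - 1 ≠ 0) :
    (α / (1 - β) - 1) * (β / (1 - α)) / ((β / (1 - α) - 1) * (α / (1 - β))) = β / α := by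
  have h1 : α / (1 - β) - 1 = (α + β - 1) / (1 - β) := by field_simp; ring
  have h2 : β / (1 - α) - 1 = (α + β - 1) / (1 - α) := by field_simp; ring
  rw [h1, h2]
  field_simp

theorem stmt10_general (β₀ : ℝ)
    (α β : ℝ) (hβ2 : β < 1) (hα1 : 1 - β < α) (hα2 : α < β)
    (h1 : |α / (1 - β) - β₀ / (1 - β₀)| < 1 / 100)
    (h2 : |β / (1 - α) - β₀ / (1 - β₀)| < 1 / 100)
    (m : ℕ) (hm : 1 ≤ m)
    (hub : α ≤ β / (1 - α) * (1 - β) * (β / α) ^ m)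
    (hlb : β / (1 - α) * (1 - β) * (β / α) ^ (m - 1) < α) :
    β₀ / (1 - β₀) - 2 < (m : ℝ) ∧ (m : ℝ) < β₀ / (1 - β₀) + 1 := by
  have hβ1 : 0 < 1 - β := by linarith
  have hB1 : 1 < β / (1 - α) := by rw [one_lt_div (by linarith)]; linarith
  have hr : 1 < β / α := by rw [one_lt_div (by linarith)]; exact hα2
  have hlt : β / (1 - α) * (β / α) ^ (m - 1) < α / (1 - β) := by
    rw [lt_div_iff₀ hβ1]; linarith
  have hle : α / (1 - β) ≤ β / (1 - α) * (β / α) ^ m := by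
    rw [div_le_iff₀ hβ1]; linarith
  have hBA : β / (1 - α) < α / (1 - β) :=
    lt_of_le_of_lt (le_mul_of_one_le_right (by linarith) (one_le_pow₀ hr.le)) hlt
  obtain ⟨c, hc, hlog⟩ := exists_log_div_eq_sub_one_mul_log hB1 hBA
  rw [skewTent_slope_ratio (by linarith) (by linarith) (by linarith) hβ1.ne' (by linarith)]
    at hlog
  obtain ⟨hm_lt, hm_le⟩ := sub_one_lt_and_le_of_pow_bracket (by linarith) hr hm hlt hle hlog
  obtain ⟨hA_lo, hA_hi⟩ := abs_lt.mp h1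
  obtain ⟨hB_lo, hB_hi⟩ := abs_lt.mp h2
  constructor <;> linarith [hc.1, hc.2]

/-- If `(α,β)` is close enough to the diagonal point `(β₀,β₀)` (in the sense that
`α/(1-β)` and `β/(1-α)` are within `1/100` of `β₀/(1-β₀)`), and `m ≥ 1` is the integer
determined by `(β/(1-α))(1-β)(β/α)^m ≥ α > (β/(1-α))(1-β)(β/α)^{m-1}` (i.e. `m = m̄_1`,
the length of the initial block of `L`'s in the kneading sequence of `T_{α,β}`), then
`β₀/(1-β₀) - 2 < m < β₀/(1-β₀) + 1`. -/
theorem stmt10 (β₀ : ℝ) (hβ₀ : β₀ ∈ Set.Ioo (1 / 2 : ℝ) 1)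
    (α β : ℝ) (hβ1 : 1 / 2 < β) (hβ2 : β < 1) (hα1 : 1 - β < α) (hα2 : α < β)
    (h1 : |α / (1 - β) - β₀ / (1 - β₀)| < 1 / 100)
    (h2 : |β / (1 - α) - β₀ / (1 - β₀)| < 1 / 100)
    (m : ℕ) (hm : 1 ≤ m)
    (hub : α ≤ β / (1 - α) * (1 - β) * (β / α) ^ m)
    (hlb : β / (1 - α) * (1 - β) * (β / α) ^ (m - 1) < α) :
    β₀ / (1 - β₀) - 2 < (m : ℝ) ∧ (m : ℝ) < β₀ / (1 - β₀) + 1 :=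
  stmt10_general β₀ α β hβ2 hα1 hα2 h1 h2 m hm hub hlb
end

section
/- Let c ∈ ℝ and p = (c,c) ∈ ℝ². Let f be a real-valued function that is continuously differentiable on an open neighborhood of p. Suppose f(t,t) = 0 for all t in some neighborhood of c, and suppose there exists a sequence of points (α_n, β_n) → p with α_n ≠ β_n and f(α_n, β_n) = 0 for all n. Then both first partial derivatives of f vanish at p: ∂_α f(p) = ∂_β f(p) = 0. -/
/-!
Rolle's theorem on the horizontal segment from `(βₙ, βₙ)` to `(αₙ, βₙ)`, where `f` vanishes at
both ends, produces zeros of `∂_α f` converging to `p`; by continuity `∂_α f (p) = 0`.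
Differentiating `f (t, t) = 0` gives `∂_α f (p) + ∂_β f (p) = 0`, hence also `∂_β f (p) = 0`.
-/

open Filter Topology

section

variable {E : Type*} [NormedAddCommGroup E] [NormedSpace ℝ E]

theorem exists_mem_segment_fderiv_apply_sub_eq_zero {f : E → ℝ} {s : Set E} (hs : Convex ℝ s)
    (hf : ∀ z ∈ s, DifferentiableAt ℝ f z) {x y : E} (hx : x ∈ s) (hy : y ∈ s)
    (hxy : f x = f y) : ∃ z ∈ segment ℝ x y, fderiv ℝ f z (y - x) = 0 := by
  obtain ⟨z, hz, h⟩ :=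
    domain_mvt (fun z hz => (hf z hz).hasFDerivAt.hasFDerivWithinAt) hs hx hy
  exact ⟨z, hz, by rw [← h, hxy, sub_self]⟩

theorem frequently_fderiv_apply_eq_zero_of_tendsto {ι : Type*} {l : Filter ι} [l.NeBot]
    {f : E → ℝ} {p v : E} (hf : ∀ᶠ q in 𝓝 p, DifferentiableAt ℝ f q) {a b : ι → E}
    (ha : Tendsto a l (𝓝 p)) (hb : Tendsto b l (𝓝 p)) (hab : ∀ᶠ i in l, f (a i) = f (b i))
    (hdir : ∀ᶠ i in l, ∃ r : ℝ, r ≠ 0 ∧ b i - a i = r • v) :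
    ∃ᶠ q in 𝓝 p, fderiv ℝ f q v = 0 := by
  rw [Metric.nhds_basis_ball.frequently_iff]
  intro ε hε
  obtain ⟨δ, hδ, hδf⟩ := Metric.eventually_nhds_iff_ball.mp hf
  set ρ := min ε δ
  have hρ : 0 < ρ := lt_min hε hδ
  obtain ⟨i, hai, hbi, habi, r, hr, hdiri⟩ :=
    ((ha.eventually (Metric.ball_mem_nhds p hρ)).and
      ((hb.eventually (Metric.ball_mem_nhds p hρ)).and (hab.and hdir))).exists
  obtain ⟨z, hz, hfz⟩ := exists_mem_segment_fderiv_apply_sub_eq_zero (convex_ball p ρ)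
    (fun z hz => hδf z (Metric.ball_subset_ball (min_le_right ε δ) hz)) hai hbi habi
  have hzρ : z ∈ Metric.ball p ρ := (convex_ball p ρ).segment_subset hai hbi hz
  refine ⟨z, Metric.ball_subset_ball (min_le_left ε δ) hzρ, ?_⟩
  rw [hdiri, map_smul, smul_eq_mul] at hfz
  exact (mul_eq_zero.mp hfz).resolve_left hr

theorem fderiv_apply_eq_zero_of_tendsto {ι : Type*} {l : Filter ι} [l.NeBot]
    {f : E → ℝ} {p v : E} (hf : ContDiffAt ℝ 1 f p) {a b : ι → E}
    (ha : Tendsto a l (𝓝 p)) (hb : Tendsto b l (𝓝 p)) (hab : ∀ᶠ i in l, f (a i) = f (b i))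
    (hdir : ∀ᶠ i in l, ∃ r : ℝ, r ≠ 0 ∧ b i - a i = r • v) :
    fderiv ℝ f p v = 0 := by
  have hdiff : ∀ᶠ q in 𝓝 p, DifferentiableAt ℝ f q :=
    (hf.eventually (by simp)).mono fun q hq => hq.differentiableAt one_ne_zero
  have hcont : ContinuousAt (fun q => fderiv ℝ f q v) p :=
    (hf.continuousAt_fderiv one_ne_zero).clm_apply continuousAt_const
  exact isClosed_singleton.mem_of_frequently_of_tendsto
    (frequently_fderiv_apply_eq_zero_of_tendsto hdiff ha hb hab hdir) hcont

theorem fderiv_apply_eq_zero_of_eventually_comp_eq_zero {F : Type*} [NormedAddCommGroup F]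
    [NormedSpace ℝ F] {f : E → F} {g : ℝ → E} {c : ℝ} {w : E}
    (hf : DifferentiableAt ℝ f (g c)) (hg : HasDerivAt g w c)
    (h0 : ∀ᶠ t in 𝓝 c, f (g t) = 0) : fderiv ℝ f (g c) w = 0 :=
  (hf.hasFDerivAt.comp_hasDerivAt c hg).unique
    ((hasDerivAt_const c (0 : F)).congr_of_eventuallyEq h0)

end

/-- If `f` is `C¹` near `p = (c,c)`, vanishes on the diagonal near `c`, and vanishes on a
sequence of off-diagonal points converging to `p`, then both first partial derivatives of
`f` vanish at `p`. -/
theorem stmt12 (c : ℝ) (f : ℝ × ℝ → ℝ) (s : Set (ℝ × ℝ))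
    (hs : IsOpen s) (hps : ((c, c) : ℝ × ℝ) ∈ s) (hf : ContDiffOn ℝ 1 f s)
    (hdiag : ∀ᶠ t in 𝓝 c, f (t, t) = 0)
    (u : ℕ → ℝ × ℝ) (hu : Tendsto u atTop (𝓝 ((c, c) : ℝ × ℝ)))
    (hne : ∀ n : ℕ, (u n).1 ≠ (u n).2) (hz : ∀ n : ℕ, f (u n) = 0) :
    deriv (fun x => f (x, c)) c = 0 ∧ deriv (fun y => f (c, y)) c = 0 := by
  have hf1 : ContDiffAt ℝ 1 f (c, c) := hf.contDiffAt (hs.mem_nhds hps)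
  have hdf : DifferentiableAt ℝ f (c, c) := hf1.differentiableAt one_ne_zero
  have hu₂ : Tendsto (fun n => (u n).2) atTop (𝓝 c) := (continuous_snd.tendsto _).comp hu
  have h₁ : fderiv ℝ f (c, c) (1, 0) = 0 :=
    fderiv_apply_eq_zero_of_tendsto hf1 (hu₂.prodMk_nhds hu₂) hu
      ((hu₂.eventually hdiag).mono fun n hn => hn.trans (hz n).symm)
      (Eventually.of_forall fun n => ⟨(u n).1 - (u n).2, sub_ne_zero.mpr (hne n),
        Prod.ext (by simp) (by simp)⟩)
  have h₁₂ : fderiv ℝ f (c, c) (1, 1) = 0 :=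
    fderiv_apply_eq_zero_of_eventually_comp_eq_zero (g := fun t => (t, t)) hdf
      ((hasDerivAt_id c).prodMk (hasDerivAt_id c)) hdiag
  have h₂ : fderiv ℝ f (c, c) (0, 1) = 0 := by
    rwa [show ((1, 1) : ℝ × ℝ) = (1, 0) + (0, 1) by simp, map_add, h₁, zero_add] at h₁₂
  have hx : HasDerivAt (fun x => f (x, c)) (fderiv ℝ f (c, c) (1, 0)) c :=
    hdf.hasFDerivAt.comp_hasDerivAt (f := fun x => (x, c)) c
      ((hasDerivAt_id c).prodMk (hasDerivAt_const c c))
  have hy : HasDerivAt (fun y => f (c, y)) (fderiv ℝ f (c, c) (0, 1)) c :=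
    hdf.hasFDerivAt.comp_hasDerivAt c ((hasDerivAt_const c c).prodMk (hasDerivAt_id c))
  exact ⟨hx.deriv.trans h₁, hy.deriv.trans h₂⟩
end

section
/- Let f : ℝ² → ℝ be twice continuously differentiable on an open neighborhood of a point p, with both first partial derivatives of f vanishing at p. Let ε > 0 and let γ : (−ε, ε) → ℝ² satisfy γ(0) = p, γ differentiable at 0, and f(γ(t)) = 0 for all t ∈ (−ε, ε). Then the Hessian quadratic form of f at p annihilates v = γ′(0), i.e. ∂²_{xx}f(p)·v₁² + 2∂²_{xy}f(p)·v₁v₂ + ∂²_{yy}f(p)·v₂² = 0. -/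
/-!
Because `f` and its differential vanish at `p`, the second-order Taylor expansion reads
`f (p + h) = ½ D²f(p) h h + o(‖h‖²)`. Along the curve, `γ t - p = t • s t` with `s t → γ' 0`,
so `0 = f (γ t)` gives `t² • D²f(p) (s t) (s t) = o(t²)`, and letting `t → 0` yields
`D²f(p) (γ' 0) (γ' 0) = 0`. The three second partial derivatives of the statement are the
entries of the symmetric bilinear form `D²f(p)` in the standard basis.
-/

open Filter Topology Asymptotics Metric

section Taylor

variable {E F : Type*} [NormedAddCommGroup E] [NormedSpace ℝ E] [NormedAddCommGroup F]
  [NormedSpace ℝ F]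

theorem isLittleO_sq_of_hasFDerivAt_of_isLittleO {g : E → F} {g' : E → E →L[ℝ] F} {x : E}
    (hg : ∀ᶠ y in 𝓝 x, HasFDerivAt g (g' y) y) (hg' : g' =o[𝓝 x] fun y => y - x)
    (hgx : g x = 0) : g =o[𝓝 x] fun y => ‖y - x‖ ^ 2 := by
  refine isLittleO_iff.2 fun c hc => ?_
  obtain ⟨δ, hδ, hball⟩ := eventually_nhds_iff_ball.1 (hg.and (hg'.def hc))
  filter_upwards [ball_mem_nhds x hδ] with y hy
  have hsub : closedBall x ‖y - x‖ ⊆ ball x δ :=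
    closedBall_subset_ball (by rwa [← dist_eq_norm, ← mem_ball])
  have hbound : ∀ z ∈ closedBall x ‖y - x‖, ‖g' z‖ ≤ c * ‖y - x‖ := fun z hz =>
    (hball z (hsub hz)).2.trans <|
      mul_le_mul_of_nonneg_left (by rwa [← dist_eq_norm, ← mem_closedBall]) hc.le
  have hmvt : ‖g y - g x‖ ≤ c * ‖y - x‖ * ‖y - x‖ :=
    (convex_closedBall x ‖y - x‖).norm_image_sub_le_of_norm_hasFDerivWithin_le
      (fun z hz => (hball z (hsub hz)).1.hasFDerivWithinAt) hbound
      (mem_closedBall_self (norm_nonneg _)) (by simp [dist_eq_norm])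
  rw [hgx, sub_zero] at hmvt
  simpa [pow_two, mul_assoc] using hmvt

theorem isLittleO_taylor_two {f : E → F} {f' : E → E →L[ℝ] F} {f'' : E →L[ℝ] E →L[ℝ] F}
    {x : E} (hf : ∀ᶠ y in 𝓝 x, HasFDerivAt f (f' y) y) (hf' : HasFDerivAt f' f'' x) :
    (fun y => f y - f x - f' x (y - x) - (2 : ℝ)⁻¹ • f'' (y - x) (y - x)) =o[𝓝 x]
      fun y => ‖y - x‖ ^ 2 := by
  refine isLittleO_sq_of_hasFDerivAt_of_isLittleO (g' := fun y => f' y - f' x - f'' (y - x))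
    ?_ hf'.isLittleO (by simp)
  filter_upwards [hf] with y hy
  have hsub : HasFDerivAt (fun y => y - x) (ContinuousLinearMap.id ℝ E) y :=
    (hasFDerivAt_id y).sub_const x
  refine (((hy.sub_const (f x)).sub ((f' x).hasFDerivAt.comp y hsub)).sub
    ((f''.hasFDerivAt_of_bilinear hsub hsub).const_smul (2 : ℝ)⁻¹)).congr_fderiv ?_
  ext k
  -- symmetry of `f''` makes the derivative of `y ↦ f'' (y - x) (y - x)` equal to `2 • f'' (y - x)`
  have hsymm : f'' k (y - x) = f'' (y - x) k :=
    second_derivative_symmetric_of_eventually hf hf' k (y - x)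
  simp only [_root_.sub_apply, _root_.smul_apply, _root_.add_apply,
    ContinuousLinearMap.precompR_apply, ContinuousLinearMap.precompL_apply,
    ContinuousLinearMap.compL_apply, ContinuousLinearMap.comp_apply,
    ContinuousLinearMap.id_apply, hsymm]
  module

theorem second_derivative_apply_tangent_eq_zero {f : E → F} {f' : E → E →L[ℝ] F}
    {f'' : E →L[ℝ] E →L[ℝ] F} {x : E} (hf : ∀ᶠ y in 𝓝 x, HasFDerivAt f (f' y) y)
    (hf' : HasFDerivAt f' f'' x) (hcrit : f' x = 0) {γ : ℝ → E} {v : E} (hγ0 : γ 0 = x)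
    (hγ : HasDerivAt γ v 0) (hzero : ∀ᶠ t in 𝓝 0, f (γ t) = 0) : f'' v v = 0 := by
  have hfx : f x = 0 := hγ0 ▸ hzero.self_of_nhds
  have hγx : Tendsto γ (𝓝 0) (𝓝 x) := hγ0 ▸ hγ.continuousAt.tendsto
  have hquad : (fun t => f'' (γ t - x) (γ t - x)) =o[𝓝 0] fun t => ‖γ t - x‖ ^ 2 := by
    refine (isLittleO_const_smul_left (c := -(2 : ℝ)⁻¹) (by norm_num)).1 <|
      ((isLittleO_taylor_two hf hf').comp_tendsto hγx).congr' ?_ EventuallyEq.rfl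
    filter_upwards [hzero] with t ht
    simp [ht, hfx, hcrit]
  have hslope : (fun t => f'' (slope γ 0 t) (slope γ 0 t)) =o[𝓝[≠] 0]
      fun t => ‖slope γ 0 t‖ ^ 2 := by
    refine ((isBigO_refl (fun t : ℝ => t⁻¹ ^ 2) _).smul_isLittleO
      (hquad.mono nhdsWithin_le_nhds)).congr (fun t => ?_) (fun t => ?_)
    -- `slope γ 0 t = t⁻¹ • (γ t - x)`, also at `t = 0` where both sides vanish
    · simp [slope_def_module, hγ0, smul_smul, pow_two]
    · simp [slope_def_module, hγ0, norm_smul, mul_pow]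
  have hv : Tendsto (slope γ 0) (𝓝[≠] 0) (𝓝 v) := hasDerivAt_iff_tendsto_slope.1 hγ
  refine tendsto_nhds_unique ?_ ((isLittleO_one_iff ℝ).1 (hslope.trans_isBigO ?_))
  · exact (f''.continuous₂.tendsto (v, v)).comp (hv.prodMk_nhds hv)
  · exact (((continuous_norm.tendsto v).comp hv).pow 2).isBigO_one ℝ

end Taylor

section Partial

variable {𝕜 F : Type*} [NontriviallyNormedField 𝕜] [NormedAddCommGroup F] [NormedSpace 𝕜 F]
  {p : 𝕜 × 𝕜}

theorem HasFDerivAt.hasDerivAt_comp_prodMk_left {f : 𝕜 × 𝕜 → F} {f' : 𝕜 × 𝕜 →L[𝕜] F}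
    (h : HasFDerivAt f f' p) : HasDerivAt (fun x => f (x, p.2)) (f' (1, 0)) p.1 :=
  h.comp_hasDerivAt p.1 ((hasDerivAt_id p.1).prodMk (hasDerivAt_const p.1 p.2))

theorem HasFDerivAt.hasDerivAt_comp_prodMk_right {f : 𝕜 × 𝕜 → F} {f' : 𝕜 × 𝕜 →L[𝕜] F}
    (h : HasFDerivAt f f' p) : HasDerivAt (fun y => f (p.1, y)) (f' (0, 1)) p.2 :=
  h.comp_hasDerivAt p.2 ((hasDerivAt_const p.2 p.1).prodMk (hasDerivAt_id p.2))

theorem HasFDerivAt.eq_zero_of_deriv_comp_prodMk {f : 𝕜 × 𝕜 → F} {f' : 𝕜 × 𝕜 →L[𝕜] F}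
    (h : HasFDerivAt f f' p) (hx : deriv (fun x => f (x, p.2)) p.1 = 0)
    (hy : deriv (fun y => f (p.1, y)) p.2 = 0) : f' = 0 := by
  ext
  · simpa [h.hasDerivAt_comp_prodMk_left.deriv] using hx
  · simpa [h.hasDerivAt_comp_prodMk_right.deriv] using hy

variable {f : 𝕜 × 𝕜 → F} {f' : 𝕜 × 𝕜 → 𝕜 × 𝕜 →L[𝕜] F} {f'' : 𝕜 × 𝕜 →L[𝕜] 𝕜 × 𝕜 →L[𝕜] F}

theorem deriv_deriv_comp_prodMk_left (hf : ∀ᶠ q in 𝓝 p, HasFDerivAt f (f' q) q)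
    (hf' : HasFDerivAt f' f'' p) :
    deriv (fun x => deriv (fun x' => f (x', p.2)) x) p.1 = f'' (1, 0) (1, 0) := by
  have hslice : (fun x => deriv (fun x' => f (x', p.2)) x) =ᶠ[𝓝 p.1]
      fun x => f' (x, p.2) (1, 0) :=
    ((tendsto_id.prodMk_nhds tendsto_const_nhds).eventually hf).mono fun x hx =>
      hx.hasDerivAt_comp_prodMk_left.deriv
  rw [hslice.deriv_eq]
  simpa using (hf'.hasDerivAt_comp_prodMk_left.clm_apply (hasDerivAt_const p.1 (1, 0))).deriv

theorem deriv_deriv_comp_prodMk_right_left (hf : ∀ᶠ q in 𝓝 p, HasFDerivAt f (f' q) q)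
    (hf' : HasFDerivAt f' f'' p) :
    deriv (fun y => deriv (fun x => f (x, y)) p.1) p.2 = f'' (0, 1) (1, 0) := by
  have hslice : (fun y => deriv (fun x => f (x, y)) p.1) =ᶠ[𝓝 p.2]
      fun y => f' (p.1, y) (1, 0) :=
    ((tendsto_const_nhds.prodMk_nhds tendsto_id).eventually hf).mono fun y hy =>
      hy.hasDerivAt_comp_prodMk_left.deriv
  rw [hslice.deriv_eq]
  simpa using (hf'.hasDerivAt_comp_prodMk_right.clm_apply (hasDerivAt_const p.2 (1, 0))).deriv

theorem deriv_deriv_comp_prodMk_right (hf : ∀ᶠ q in 𝓝 p, HasFDerivAt f (f' q) q)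
    (hf' : HasFDerivAt f' f'' p) :
    deriv (fun y => deriv (fun y' => f (p.1, y')) y) p.2 = f'' (0, 1) (0, 1) := by
  have hslice : (fun y => deriv (fun y' => f (p.1, y')) y) =ᶠ[𝓝 p.2]
      fun y => f' (p.1, y) (0, 1) :=
    ((tendsto_const_nhds.prodMk_nhds tendsto_id).eventually hf).mono fun y hy =>
      hy.hasDerivAt_comp_prodMk_right.deriv
  rw [hslice.deriv_eq]
  simpa using (hf'.hasDerivAt_comp_prodMk_right.clm_apply (hasDerivAt_const p.2 (0, 1))).deriv

end Partial

theorem ContinuousLinearMap.apply_self_eq_of_symm {𝕜 : Type*} [NontriviallyNormedField 𝕜]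
    (B : 𝕜 × 𝕜 →L[𝕜] 𝕜 × 𝕜 →L[𝕜] 𝕜) (hB : B (1, 0) (0, 1) = B (0, 1) (1, 0)) (v : 𝕜 × 𝕜) :
    B v v = B (1, 0) (1, 0) * v.1 ^ 2 + 2 * B (0, 1) (1, 0) * v.1 * v.2
      + B (0, 1) (0, 1) * v.2 ^ 2 := by
  have hv : v = v.1 • ((1 : 𝕜), (0 : 𝕜)) + v.2 • ((0 : 𝕜), (1 : 𝕜)) := by simp
  conv_lhs => rw [hv]
  simp only [map_add, map_smul, add_apply, smul_apply, smul_eq_mul, hB]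
  ring

/-- If `f` is `C²` near `p`, its first partial derivatives vanish at `p`, and
`γ : (-ε,ε) → ℝ²` is a curve through `p = γ(0)`, differentiable at `0`, lying in the zero
set of `f`, then the Hessian quadratic form of `f` at `p` annihilates `v = γ'(0)`. -/
theorem stmt13 (f : ℝ × ℝ → ℝ) (p : ℝ × ℝ) (s : Set (ℝ × ℝ))
    (hs : IsOpen s) (hps : p ∈ s) (hf : ContDiffOn ℝ 2 f s)
    (hx : deriv (fun x => f (x, p.2)) p.1 = 0)
    (hy : deriv (fun y => f (p.1, y)) p.2 = 0)
    (ε : ℝ) (hε : 0 < ε) (γ : ℝ → ℝ × ℝ) (hγ0 : γ 0 = p)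
    (hγd : DifferentiableAt ℝ γ 0)
    (hγz : ∀ t ∈ Set.Ioo (-ε) ε, f (γ t) = 0) :
    deriv (fun x => deriv (fun x' => f (x', p.2)) x) p.1 * (deriv γ 0).1 ^ 2
      + 2 * deriv (fun y => deriv (fun x => f (x, y)) p.1) p.2
          * (deriv γ 0).1 * (deriv γ 0).2
      + deriv (fun y => deriv (fun y' => f (p.1, y')) y) p.2 * (deriv γ 0).2 ^ 2 = 0 := by
  have hf' : ∀ᶠ q in 𝓝 p, HasFDerivAt f (fderiv ℝ f q) q := by
    filter_upwards [hs.mem_nhds hps] with q hq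
    exact ((hf.contDiffAt (hs.mem_nhds hq)).differentiableAt two_ne_zero).hasFDerivAt
  have hf'' : HasFDerivAt (fderiv ℝ f) (fderiv ℝ (fderiv ℝ f) p) p :=
    (((hf.contDiffAt (hs.mem_nhds hps)).fderiv_right one_add_one_eq_two.le).differentiableAt
      one_ne_zero).hasFDerivAt
  have hcrit : fderiv ℝ f p = 0 := hf'.self_of_nhds.eq_zero_of_deriv_comp_prodMk hx hy
  have hzero : ∀ᶠ t in 𝓝 0, f (γ t) = 0 :=
    eventually_of_mem (Ioo_mem_nhds (neg_neg_of_pos hε) hε) hγz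
  rw [deriv_deriv_comp_prodMk_left hf' hf'', deriv_deriv_comp_prodMk_right_left hf' hf'',
    deriv_deriv_comp_prodMk_right hf' hf'', ← ContinuousLinearMap.apply_self_eq_of_symm _
      (second_derivative_symmetric_of_eventually hf' hf'' _ _)]
  exact second_derivative_apply_tangent_eq_zero hf' hf'' hcrit hγ0 hγd.hasDerivAt hzero
end

section
/- Let 1/2 < β ≤ 1 and 1−β < α < β, let (m̄_k)_{k≥0} be a nondecreasing sequence of integers with m̄_0 = 0 and m̄_1 ≥ 1, and let K ≥ 1 be an integer. Assume that for every integer n with 0 ≤ n < K + m̄_K: T_{α,β}^n(β) > α if n = k + m̄_k for some 0 ≤ k ≤ K−1, and T_{α,β}^n(β) ≤ α otherwise. Then T_{α,β}^{K+m̄_K}(β) = (−1)^{K−1} (β/(1−α))^K (β/α)^{m̄_K} · ( 1 − β + Σ_{k=1}^{K−1} ((α−1)/β)^k (α/β)^{m̄_k} ). -/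
theorem eq_mul_sub_sum_inv_of_recurrence {𝕜 : Type*} [Field 𝕜] {y c P : ℕ → 𝕜} {K : ℕ}
    (hP : ∀ k, P k ≠ 0) (hPc : ∀ k, P (k + 1) = -c k * P k)
    (hy : ∀ k < K, y (k + 1) = c k * (1 - y k)) :
    ∀ k ≤ K, y k = P k * (y 0 / P 0 - ∑ i ∈ Finset.range k, (P i)⁻¹) := by
  intro k hk
  induction k with
  | zero => simp [mul_div_cancel₀ _ (hP 0)]
  | succ k ih =>
    rw [hy k hk, ih (by omega), Finset.sum_range_succ, hPc]
    field_simp [hP k]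
    ring

theorem eq_of_kneading_recurrence {𝕜 : Type*} [Field 𝕜] {u v : 𝕜} (hu : u ≠ 0) (hv : v ≠ 0)
    {m : ℕ → ℕ} (hm0 : m 0 = 0) (hmono : Monotone m) {y : ℕ → 𝕜} {K : ℕ} (hK : 1 ≤ K)
    (hy : ∀ k < K, y (k + 1) = u ^ (m (k + 1) - m k) * v * (1 - y k)) :
    y K = (-1) ^ (K - 1) * v ^ K * u ^ m K *
      (1 - y 0 + ∑ i ∈ Finset.range (K - 1), (-v⁻¹) ^ (i + 1) * u⁻¹ ^ m (i + 1)) := by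
  set P : ℕ → 𝕜 := fun k => -(-v) ^ k * u ^ m k
  have hP : ∀ k, P k ≠ 0 := fun k => by simp [P, hu, hv]
  have hPc : ∀ k, P (k + 1) = -(u ^ (m (k + 1) - m k) * v) * P k := fun k => by
    obtain ⟨d, hd⟩ := Nat.exists_eq_add_of_le (hmono (Nat.le_add_right k 1))
    simp only [P, hd, Nat.add_sub_cancel_left, pow_add]
    ring
  have hterm : ∀ i, (-v⁻¹) ^ i * u⁻¹ ^ m i = -(P i)⁻¹ := fun i => by
    simp only [P, neg_mul, inv_neg, neg_neg, mul_inv, ← inv_pow]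
  obtain ⟨j, rfl⟩ : ∃ j, K = j + 1 := ⟨K - 1, by omega⟩
  rw [eq_mul_sub_sum_inv_of_recurrence hP hPc hy (j + 1) le_rfl, Finset.sum_range_succ']
  have hP0 : P 0 = -1 := by simp [P, hm0]
  simp only [hterm, Finset.sum_neg_distrib, hP0, P, Nat.add_sub_cancel]
  ring

namespace SkewTent

variable {α β x : ℝ}

theorem T_of_le (hx : x ≤ α) : T α β x = β / α * x := if_pos hx

theorem T_of_lt (hx : α < x) : T α β x = β / (1 - α) * (1 - x) := if_neg hx.not_ge

theorem iterate_T_of_forall_le {d : ℕ} (h : ∀ i < d, (T α β)^[i] x ≤ α) :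
    (T α β)^[d] x = (β / α) ^ d * x := by
  induction d with
  | zero => simp
  | succ d ih =>
    rw [Function.iterate_succ_apply', T_of_le (h d d.lt_succ_self),
      ih fun i hi => h i (hi.trans d.lt_succ_self)]
    ring

theorem iterate_T_succ_of_lt_of_forall_le {d : ℕ} (hx : α < x)
    (h : ∀ i < d, (T α β)^[i + 1] x ≤ α) :
    (T α β)^[d + 1] x = (β / α) ^ d * (β / (1 - α)) * (1 - x) := by
  rw [Function.iterate_succ_apply, iterate_T_of_forall_le (by simpa using h), T_of_lt hx,
    mul_assoc]

theorem iterate_T_of_kneading {n : ℕ → ℕ} (hn : StrictMono n) {K : ℕ}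
    (hR : ∀ k < K, α < (T α β)^[n k] x)
    (hL : ∀ j < n K, (∀ k < K, j ≠ n k) → (T α β)^[j] x ≤ α) (k : ℕ) (hk : k < K) :
    (T α β)^[n (k + 1)] x =
      (β / α) ^ (n (k + 1) - n k - 1) * (β / (1 - α)) * (1 - (T α β)^[n k] x) := by
  have hlt : n k < n (k + 1) := hn k.lt_succ_self
  obtain ⟨d, hd⟩ : ∃ d, n (k + 1) = (d + 1) + n k := ⟨n (k + 1) - n k - 1, by omega⟩
  rw [hd, Function.iterate_add_apply, Nat.add_sub_cancel, Nat.add_sub_cancel]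
  refine iterate_T_succ_of_lt_of_forall_le (hR k hk) fun i hi => ?_
  rw [← Function.iterate_add_apply]
  have hle : n (k + 1) ≤ n K := hn.monotone hk
  refine hL _ (by omega) fun k' _ hk' => ?_
  have h₁ : k < k' := hn.lt_iff_lt.mp (by omega)
  have h₂ : k' < k + 1 := hn.lt_iff_lt.mp (by omega)
  omega

end SkewTent

open SkewTent in
theorem stmt14_general (α β : ℝ) (hβ1 : 1 / 2 < β) (hβ2 : β ≤ 1)
    (hα1 : 1 - β < α) (hα2 : α < β)
    (m : ℕ → ℕ) (hm0 : m 0 = 0) (hmono : Monotone m)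
    (K : ℕ) (hK : 1 ≤ K)
    (hpat : ∀ n : ℕ, n < K + m K →
      ((∃ k : ℕ, k ≤ K - 1 ∧ n = k + m k) → α < (T α β)^[n] β) ∧
      ((¬ ∃ k : ℕ, k ≤ K - 1 ∧ n = k + m k) → (T α β)^[n] β ≤ α)) :
    (T α β)^[K + m K] β =
      (-1 : ℝ) ^ (K - 1) * (β / (1 - α)) ^ K * (β / α) ^ (m K) *
        (1 - β + ∑ k ∈ Finset.range (K - 1),
          ((α - 1) / β) ^ (k + 1) * (α / β) ^ (m (k + 1))) := by
  have hβ : 0 < β := by linarith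
  have hα : 0 < α := by linarith
  have hα' : 0 < 1 - α := by linarith
  have hn : StrictMono fun k => k + m k := strictMono_id.add_monotone hmono
  have hblock := iterate_T_of_kneading (x := β) hn
    (fun k hk => (hpat _ (hn hk)).1 ⟨k, by omega, rfl⟩)
    (fun j hj hj' => (hpat j hj).2 fun ⟨k, hk, hjk⟩ => hj' k (by omega) hjk)
  rw [eq_of_kneading_recurrence (y := fun k => (T α β)^[k + m k] β) (u := β / α)
    (v := β / (1 - α)) (by positivity) (by positivity) hm0 hmono hK fun k hk => by
      rw [hblock k hk, show k + 1 + m (k + 1) - (k + m k) - 1 = m (k + 1) - m k by omega]]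
  simp only [hm0, add_zero, Function.iterate_zero_apply, inv_div, ← neg_div, neg_sub]

/-- If the orbit of `β` under `T_{α,β}` follows the pattern `R L^{m_1} R L^{m_2} ⋯` for the
first `K + m̄_K` steps, then
`T^{K+m̄_K}(β) = (-1)^{K-1} (β/(1-α))^K (β/α)^{m̄_K} (1 - β + ∑_{k=1}^{K-1} ((α-1)/β)^k (α/β)^{m̄_k})`. -/
theorem stmt14 (α β : ℝ) (hβ1 : 1 / 2 < β) (hβ2 : β ≤ 1)
    (hα1 : 1 - β < α) (hα2 : α < β)
    (m : ℕ → ℕ) (hm0 : m 0 = 0) (hm1 : 1 ≤ m 1) (hmono : Monotone m)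
    (K : ℕ) (hK : 1 ≤ K)
    (hpat : ∀ n : ℕ, n < K + m K →
      ((∃ k : ℕ, k ≤ K - 1 ∧ n = k + m k) → α < (T α β)^[n] β) ∧
      ((¬ ∃ k : ℕ, k ≤ K - 1 ∧ n = k + m k) → (T α β)^[n] β ≤ α)) :
    (T α β)^[K + m K] β =
      (-1 : ℝ) ^ (K - 1) * (β / (1 - α)) ^ K * (β / α) ^ (m K) *
        (1 - β + ∑ k ∈ Finset.range (K - 1),
          ((α - 1) / β) ^ (k + 1) * (α / β) ^ (m (k + 1))) :=
  stmt14_general α β hβ1 hβ2 hα1 hα2 m hm0 hmono K hK hpat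
end

section
/- Let (α,β) ∈ U with α < β. Suppose T_{α,β}(β) ≤ α and T_{α,β}²(β) = α (so that the kneading sequence of T_{α,β} is RLC). Then α²(1−α) = β²(1−β), equivalently α³ − α² − β³ + β² = 0. -/
/-- If `(α,β) ∈ U`, `T(β) ≤ α` and `T²(β) = α` (kneading sequence `RLC`), then
`α²(1-α) = β²(1-β)`, equivalently `α³ - α² - β³ + β² = 0`. -/
theorem stmt17 (α β : ℝ) (hβ1 : 1 / 2 < β) (hβ2 : β ≤ 1)
    (hα1 : 1 - β < α) (hα2 : α < β)
    (h1 : T α β β ≤ α) (h2 : (T α β)^[2] β = α) :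
    α ^ 2 * (1 - α) = β ^ 2 * (1 - β) ∧ α ^ 3 - α ^ 2 - β ^ 3 + β ^ 2 = 0 := by
  have hα0 : 0 < α := by linarith
  have hα1' : α < 1 := by linarith
  have hTβ : T α β β = β / (1 - α) * (1 - β) := by
    unfold T; rw [if_neg (by linarith)]
  rw [Function.iterate_succ, Function.iterate_one, Function.comp_apply, hTβ] at h2
  rw [hTβ] at h1
  unfold T at h2
  rw [if_pos h1] at h2
  have key : β / α * (β / (1 - α) * (1 - β)) = α := h2
  have h1α : (1 : ℝ) - α ≠ 0 := by linarith
  have hα0' : α ≠ 0 := ne_of_gt hα0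
  have : β * (β * (1 - β)) = α * (α * (1 - α)) := by
    field_simp at key
    linarith [key]
  constructor <;> nlinarith [this]
end

section
/- Let (α,β) ∈ U with α < β. Suppose T_{α,β}(β) ≤ α, T_{α,β}²(β) ≤ α, T_{α,β}³(β) > α and T_{α,β}⁴(β) = α (so that the kneading sequence of T_{α,β} is RLLRC). Then α⁵ − 2α⁴ + α³(β+1) − α²β − β⁵ + β⁴ = 0. -/
/-- If `(α,β) ∈ U`, `T(β) ≤ α`, `T²(β) ≤ α`, `T³(β) > α` and `T⁴(β) = α` (kneading sequence
`RLLRC`), then `α⁵ - 2α⁴ + α³(β+1) - α²β - β⁵ + β⁴ = 0`. -/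
theorem stmt18 (α β : ℝ) (hβ1 : 1 / 2 < β) (hβ2 : β ≤ 1)
    (hα1 : 1 - β < α) (hα2 : α < β)
    (h1 : T α β β ≤ α) (h2 : (T α β)^[2] β ≤ α)
    (h3 : α < (T α β)^[3] β) (h4 : (T α β)^[4] β = α) :
    α ^ 5 - 2 * α ^ 4 + α ^ 3 * (β + 1) - α ^ 2 * β - β ^ 5 + β ^ 4 = 0 := by
  have hα0 : 0 < α := by linarith
  have hα1' : α < 1 := by linarith
  have hne : α ≠ 0 := ne_of_gt hα0
  have h1ne : (1:ℝ) - α ≠ 0 := by intro h; linarith [h]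
  have e1 : T α β β = β / (1 - α) * (1 - β) := by
    rw [T, if_neg (not_le.mpr hα2)]
  have e2 : (T α β)^[2] β = β / α * (β / (1 - α) * (1 - β)) := by
    rw [Function.iterate_succ_apply', Function.iterate_one, e1, T,
      if_pos (e1 ▸ h1)]
  have e3 : (T α β)^[3] β = β / α * (β / α * (β / (1 - α) * (1 - β))) := by
    rw [show (3:ℕ) = 2 + 1 from rfl, Function.iterate_succ_apply', e2, T,
      if_pos (e2 ▸ h2)]
  have e4 : (T α β)^[4] β
      = β / (1 - α) * (1 - β / α * (β / α * (β / (1 - α) * (1 - β)))) := by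
    rw [show (4:ℕ) = 3 + 1 from rfl, Function.iterate_succ_apply', e3, T,
      if_neg (not_le.mpr (e3 ▸ h3))]
  rw [e4] at h4
  field_simp at h4
  nlinarith [h4, sq_nonneg α, sq_nonneg β]
end

section
/- Let (α,β) ∈ U with β < 1. Suppose there is an integer n ≥ 1 with T_{α,β}^j(β) ≠ α for all 0 ≤ j < n and T_{α,β}^n(β) = α, and for 0 ≤ j < n let A_j = L if T_{α,β}^j(β) < α and A_j = R if T_{α,β}^j(β) > α (so the kneading sequence of T_{α,β} is A_0⋯A_{n−1}C). Define M⁻ = (A_0⋯A_{n−1}L)^∞ if A_0⋯A_{n−1} contains an even number of R's, and M⁻ = (A_0⋯A_{n−1}R)^∞ otherwise. Then M⁻ is maximal with respect to the parity-lexicographic order: σ^k M⁻ ⪯ M⁻ for every k ≥ 0. -/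
/-- Let `(α,β) ∈ U`, `β < 1`, and suppose the turning point is periodic:
`T^j(β) ≠ α` for `j < n` and `T^n(β) = α`, with itinerary symbols
`A_j = L` if `T^j(β) < α`, `A_j = R` if `T^j(β) > α`, so that the kneading sequence is
`A_0⋯A_{n-1}C`. Then `M⁻ = (A_0⋯A_{n-1}X)^∞` (with `X = L` if `A_0⋯A_{n-1}` has an even
number of `R`'s, else `X = R`) is maximal w.r.t. the parity-lexicographic order. -/
theorem stmt19 (α β : ℝ) (hβ1 : 1 / 2 < β) (hβ2 : β < 1)
    (hα1 : 1 - β < α) (hα2 : α < β)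
    (n : ℕ) (hn : 1 ≤ n)
    (hne : ∀ j < n, (T α β)^[j] β ≠ α) (heq : (T α β)^[n] β = α)
    (A : ℕ → Symb)
    (hA : ∀ j < n, A j = if (T α β)^[j] β < α then Symb.L else Symb.R)
    (Mm : ℕ → Symb)
    (hMm : ∀ i : ℕ, Mm i = if i % (n + 1) < n then A (i % (n + 1))
      else if Even (countR A n) then Symb.L else Symb.R) :
    maximal Mm := by
  classical
  have hβ0 : (0:ℝ) < β := by linarith
  have hα0 : (0:ℝ) < α := by linarith
  have h1α : (0:ℝ) < 1 - α := by linarith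
  set f := T α β with hfdef
  have hfL : ∀ t : ℝ, t ≤ α → f t = β / α * t := by
    intro t ht; simp only [hfdef, T, if_pos ht]
  have hfR : ∀ t : ℝ, α ≤ t → f t = β / (1 - α) * (1 - t) := by
    intro t ht
    rcases eq_or_lt_of_le ht with h | h
    · rw [← h]
      simp only [hfdef, T, if_pos le_rfl]
      rw [div_mul_cancel₀ β hα0.ne', div_mul_cancel₀ β h1α.ne']
    · simp only [hfdef, T, if_neg (not_le.mpr h)]
  have hcoefL : (0:ℝ) < β / α := div_pos hβ0 hα0
  have hcoefR : (0:ℝ) < β / (1 - α) := div_pos hβ0 h1α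
  have monoL : ∀ a b : ℝ, a < b → b ≤ α → f a < f b := by
    intro a b hab hb
    rw [hfL a (hab.le.trans hb), hfL b hb]
    exact mul_lt_mul_of_pos_left hab hcoefL
  have monoR : ∀ a b : ℝ, a < b → α ≤ a → f b < f a := by
    intro a b hab ha
    rw [hfR a ha, hfR b (ha.trans hab.le)]
    have : (1:ℝ) - b < 1 - a := by linarith
    exact mul_lt_mul_of_pos_left this hcoefR
  have hfα : f α = β := by rw [hfL α le_rfl]; exact div_mul_cancel₀ β hα0.ne'
  have hltβ : ∀ t : ℝ, t ≠ α → f t < β := by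
    intro t ht
    rcases lt_or_gt_of_ne ht with h | h
    · rw [← hfα]; exact monoL t α h le_rfl
    · rw [← hfα]; exact monoR α t h le_rfl
  have hstep : ∀ j : ℕ, f^[j+1] β = f (f^[j] β) := fun j => Function.iterate_succ_apply' f j β
  have hxp : f^[n+1] β = β := by rw [hstep n, heq, hfα]
  have hper : ∀ j : ℕ, f^[j + (n+1)] β = f^[j] β := by
    intro j; rw [Function.iterate_add_apply, hxp]
  have hmod : ∀ j : ℕ, f^[j] β = f^[j % (n+1)] β := by
    intro j
    conv_lhs => rw [← Nat.mod_add_div j (n+1)]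
    generalize j / (n+1) = q
    induction q with
    | zero => simp
    | succ q ih => rw [Nat.mul_succ, ← Nat.add_assoc, hper, ih]
  have hp0 : 0 < n + 1 := Nat.succ_pos n
  have hMC : ∀ i, Mm i ≠ Symb.C := by
    intro i
    rw [hMm i]
    split_ifs with h1 h2
    · rw [hA _ h1]; split_ifs <;> simp
    · simp
    · simp
  have hML : ∀ i, Mm i = Symb.L → f^[i] β ≤ α := by
    intro i hi
    rw [hMm i] at hi
    rw [hmod i]
    have hlt := Nat.mod_lt i hp0
    by_cases h1 : i % (n+1) < n
    · rw [if_pos h1, hA _ h1] at hi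
      by_cases h3 : f^[i % (n+1)] β < α
      · exact le_of_lt h3
      · rw [if_neg h3] at hi
        exact absurd hi (by simp)
    · have h4 : i % (n+1) = n := by omega
      rw [h4, heq]
  have hMR : ∀ i, Mm i = Symb.R → α ≤ f^[i] β := by
    intro i hi
    rw [hMm i] at hi
    rw [hmod i]
    have hlt := Nat.mod_lt i hp0
    by_cases h1 : i % (n+1) < n
    · rw [if_pos h1, hA _ h1] at hi
      by_cases h3 : f^[i % (n+1)] β < α
      · rw [if_pos h3] at hi
        exact absurd hi (by simp)
      · exact le_of_not_gt h3
    · have h4 : i % (n+1) = n := by omega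
      rw [h4, heq]
  have hMmod : ∀ i, Mm i = Mm (i % (n+1)) := by
    intro i
    rw [hMm i, hMm (i % (n+1))]
    congr 1 <;> rw [Nat.mod_mod_of_dvd i dvd_rfl]
  have hMadd : ∀ k i : ℕ, Mm (k + i) = Mm (k % (n+1) + i) := by
    intro k i
    rw [hMmod (k+i), hMmod (k % (n+1) + i)]
    congr 1
    rw [Nat.add_mod k i, Nat.add_mod (k % (n+1)) i, Nat.mod_mod_of_dvd k dvd_rfl]
  have hcsucc : ∀ (B : ℕ → Symb) (j : ℕ),
      countR B (j+1) = countR B j + (if B j = Symb.R then 1 else 0) := by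
    intro B j
    unfold countR
    rw [Finset.range_add_one, Finset.filter_insert]
    split_ifs with h
    · rw [Finset.card_insert_of_notMem (by simp)]
    · simp
  have hccong : ∀ (B C : ℕ → Symb) (j : ℕ), (∀ i < j, B i = C i) → countR B j = countR C j := by
    intro B C j h
    unfold countR
    congr 1
    apply Finset.filter_congr
    intro i hi
    rw [h i (Finset.mem_range.mp hi)]
  unfold maximal
  intro k
  unfold ple
  obtain ⟨r, hr⟩ : ∃ r, r = k % (n+1) := ⟨_, rfl⟩
  have hrlt : r < n + 1 := hr ▸ Nat.mod_lt k hp0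
  have hMadd' : ∀ i : ℕ, Mm (k + i) = Mm (r + i) := fun i => by rw [hMadd k i, ← hr]
  rcases Nat.eq_zero_or_pos r with hr0 | hr1
  · left
    funext i
    show Mm (k + i) = Mm i
    rw [hMadd' i, hr0, Nat.zero_add]
  · have hrn : r ≤ n := by omega
    have hxr : f^[r] β < β := by
      obtain ⟨s, rfl⟩ : ∃ s, r = s + 1 := ⟨r - 1, by omega⟩
      rw [hstep s]
      exact hltβ _ (hne s (by omega))
    by_cases hEq : (fun i => Mm (r + i)) = Mm
    · left
      funext i
      show Mm (k + i) = Mm i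
      rw [hMadd' i]
      exact congrFun hEq i
    · have hdiff : ∃ m, Mm (r + m) ≠ Mm m := by
        by_contra h
        push_neg at h
        exact hEq (funext h)
      set m := Nat.find hdiff with hmdef
      have hm : Mm (r + m) ≠ Mm m := Nat.find_spec hdiff
      have hagree : ∀ j < m, Mm (r + j) = Mm j := fun j hj => not_not.mp (Nat.find_min hdiff hj)
      have key : ∀ j, j ≤ m →
          (Even (countR Mm j) → f^[r + j] β < f^[j] β) ∧
          (¬ Even (countR Mm j) → f^[j] β < f^[r + j] β) := by
        intro j
        induction j with
        | zero =>
          intro _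
          constructor
          · intro _
            simpa using hxr
          · intro h
            exact absurd (by simp [countR]) h
        | succ j ih =>
          intro hj
          have hjm : j < m := by omega
          obtain ⟨ih1, ih2⟩ := ih (by omega)
          have hag : Mm (r + j) = Mm j := hagree j hjm
          have hs1 : f^[r + (j+1)] β = f (f^[r+j] β) := by
            rw [show r + (j+1) = (r+j)+1 by ring, hstep]
          have hs2 : f^[j+1] β = f (f^[j] β) := hstep j
          rw [hcsucc Mm j]
          cases hsym : Mm j with
          | L =>
            rw [if_neg (by simp)]
            have h1 : f^[j] β ≤ α := hML j hsym
            have h2 : f^[r+j] β ≤ α := hML (r+j) (hag.trans hsym)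
            simp only [Nat.add_zero]
            constructor
            · intro he
              rw [hs1, hs2]
              exact monoL _ _ (ih1 he) h1
            · intro he
              rw [hs1, hs2]
              exact monoL _ _ (ih2 he) h2
          | C => exact absurd hsym (hMC j)
          | R =>
            rw [if_pos rfl]
            have h1 : α ≤ f^[j] β := hMR j hsym
            have h2 : α ≤ f^[r+j] β := hMR (r+j) (hag.trans hsym)
            rw [Nat.even_add_one]
            constructor
            · intro he
              rw [hs1, hs2]
              exact monoR _ _ (ih2 he) h1
            · intro he
              rw [hs1, hs2]
              exact monoR _ _ (ih1 (not_not.mp he)) h2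
      right
      refine ⟨m, ?_, ?_⟩
      · intro i hi
        show Mm (k + i) = Mm i
        rw [hMadd' i]
        exact hagree i hi
      · have hcr : countR (fun i => Mm (k + i)) m = countR Mm m := by
          apply hccong
          intro i hi
          show Mm (k + i) = Mm i
          rw [hMadd' i]
          exact hagree i hi
        obtain ⟨hkey1, hkey2⟩ := key m le_rfl
        have hMk : Mm (k + m) = Mm (r + m) := hMadd' m
        by_cases he : Even (countR Mm m)
        · left
          refine ⟨by rw [hcr]; exact he, ?_⟩
          have hlt := hkey1 he
          show (Mm (k + m)).toNat < (Mm m).toNat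
          rw [hMk]
          cases h1 : Mm (r + m) with
          | C => exact absurd h1 (hMC _)
          | L =>
            cases h2 : Mm m with
            | C => exact absurd h2 (hMC _)
            | L => exact absurd (h1.trans h2.symm) hm
            | R => simp [Symb.toNat]
          | R =>
            have ha1 := hMR _ h1
            cases h2 : Mm m with
            | C => exact absurd h2 (hMC _)
            | L =>
              have ha2 := hML _ h2
              exact absurd hlt (by linarith)
            | R => exact absurd (h1.trans h2.symm) hm
        · right
          refine ⟨by rw [hcr]; exact he, ?_⟩
          have hlt := hkey2 he
          show (Mm m).toNat < (Mm (k + m)).toNat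
          rw [hMk]
          cases h1 : Mm (r + m) with
          | C => exact absurd h1 (hMC _)
          | R =>
            cases h2 : Mm m with
            | C => exact absurd h2 (hMC _)
            | R => exact absurd (h1.trans h2.symm) hm
            | L => simp [Symb.toNat]
          | L =>
            have ha1 := hML _ h1
            cases h2 : Mm m with
            | C => exact absurd h2 (hMC _)
            | R =>
              have ha2 := hMR _ h2
              exact absurd hlt (by linarith)
            | L => exact absurd (h1.trans h2.symm) hm
end
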